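/- arXiv:2008.03158 — 13 statements merged into one kernel-verified Lean document; each statement's English description precedes it below -/
import Mathlib

section
/- Let Ω = {(x, y) ∈ ℝ^n × ℝ^n : y ≥ 0 and x_i y_i = 0 for all i}. For every (x̄, ȳ) ∈ Ω one has T_Ω(x̄, ȳ)° = D_Ω(x̄, ȳ)°, where D_Ω(x̄, ȳ) = {(u, v) ∈ ℝ^n × ℝ^n : v_i ≥ 0 for every i with ȳ_i = 0, and ȳ_i u_i + x̄_i v_i = 0 for all i}. That is, Guignard's constraint qualification holds at every point of Ω for the constraints −y ≤ 0, x * y = 0. -/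
open Filter Topology
open scoped RealInnerProductSpace

noncomputable section

/-- The (Bouligand) tangent cone of a set `S` at `x`. -/
def tangentConeSeq {N : Type*} [NormedAddCommGroup N] [NormedSpace ℝ N]
    (S : Set N) (x : N) : Set N :=
  {d | ∃ (u : ℕ → N) (t : ℕ → ℝ), (∀ k, u k ∈ S) ∧ (∀ k, 0 < t k) ∧
    Tendsto t atTop (𝓝 0) ∧ Tendsto (fun k => (t k)⁻¹ • (u k - x)) atTop (𝓝 d)}

/-- Polar cone of a subset of a product of two inner product spaces
(the inner product of the product being the sum of the factor inner products). -/
def polarConeProd {N M : Type*} [NormedAddCommGroup N] [InnerProductSpace ℝ N]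
    [NormedAddCommGroup M] [InnerProductSpace ℝ M] (S : Set (N × M)) : Set (N × M) :=
  {q | ∀ s ∈ S, ⟪q.1, s.1⟫ + ⟪q.2, s.2⟫ ≤ 0}

/-!
Each coordinate projection `(x, y) ↦ (xᵢ, yᵢ)` maps `Ω` into the planar set
`{(a, b) | 0 ≤ b, a b = 0}`, whose tangent directions at `(x̄ᵢ, ȳᵢ)` satisfy the linearized
constraints by passing to the limit in `(aₖ bₖ - x̄ᵢ ȳᵢ) / tₖ = 0`; hence `T ⊆ D` and `D° ⊆ T°`.
Conversely, every `(u, v) ∈ D` is the sum of the directions `(uᵢ eᵢ, 0)` and `(0, vᵢ eᵢ)`, and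
each of these is tangent, since moving only `xᵢ` (where `ȳᵢ = 0`) or only `yᵢ` (where `x̄ᵢ = 0`)
keeps the point in `Ω` for small steps. Splitting a biactive direction into these two pieces is
what makes `D` lie in the additive closure of `T`, and a polar cone does not see that closure.
-/

open Set

section TangentCone

variable {N P : Type*} [NormedAddCommGroup N] [NormedSpace ℝ N]
  [NormedAddCommGroup P] [NormedSpace ℝ P]

theorem mem_tangentConeSeq_of_eventually_add_smul_mem {S : Set N} {x d : N}
    (h : ∀ᶠ t in 𝓝[>] (0 : ℝ), x + t • d ∈ S) : d ∈ tangentConeSeq S x := by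
  obtain ⟨c, hc, hcS⟩ := mem_nhdsGT_iff_exists_Ioo_subset.1 h
  have ht : ∀ k : ℕ, c / ((k : ℝ) + 2) ∈ Ioo 0 c := fun k =>
    ⟨div_pos hc (by positivity), div_lt_self hc (by linarith [k.cast_nonneg (α := ℝ)])⟩
  refine ⟨fun k => x + (c / ((k : ℝ) + 2)) • d, fun k => c / ((k : ℝ) + 2),
    fun k => hcS (ht k), fun k => (ht k).1, ?_, ?_⟩
  · simpa [Function.comp_def] using
      (tendsto_const_div_atTop_nhds_zero_nat c).comp (tendsto_add_atTop_nat 2)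
  · refine tendsto_const_nhds.congr fun k => ?_
    rw [add_sub_cancel_left, smul_smul, inv_mul_cancel₀ (ht k).1.ne', one_smul]

theorem tendsto_of_tendsto_inv_smul_sub {u : ℕ → N} {t : ℕ → ℝ} {x d : N}
    (ht : ∀ k, t k ≠ 0) (ht0 : Tendsto t atTop (𝓝 0))
    (hd : Tendsto (fun k => (t k)⁻¹ • (u k - x)) atTop (𝓝 d)) :
    Tendsto u atTop (𝓝 x) := by
  have := (ht0.smul hd).add_const x
  rw [zero_smul, zero_add] at this
  refine this.congr fun k => ?_
  rw [smul_smul, mul_inv_cancel₀ (ht k), one_smul, sub_add_cancel]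

theorem mapsTo_tangentConeSeq (L : N →L[ℝ] P) {S : Set N} {S' : Set P} (h : MapsTo L S S')
    (x : N) : MapsTo L (tangentConeSeq S x) (tangentConeSeq S' (L x)) := by
  rintro d ⟨u, t, hu, ht, ht0, hd⟩
  refine ⟨fun k => L (u k), t, fun k => h (hu k), ht, ht0, ?_⟩
  simpa only [Function.comp_def, map_smul, map_sub] using (L.continuous.tendsto d).comp hd

end TangentCone

section Polar

variable {N M : Type*} [NormedAddCommGroup N] [InnerProductSpace ℝ N]
  [NormedAddCommGroup M] [InnerProductSpace ℝ M]

theorem polarConeProd_anti {S T : Set (N × M)} (h : S ⊆ T) :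
    polarConeProd T ⊆ polarConeProd S :=
  fun _ hq s hs => hq s (h hs)

theorem polarConeProd_addSubmonoidClosure (S : Set (N × M)) :
    polarConeProd (AddSubmonoid.closure S : Set (N × M)) = polarConeProd S := by
  refine (polarConeProd_anti AddSubmonoid.subset_closure).antisymm fun _ hq s hs => ?_
  induction hs using AddSubmonoid.closure_induction with
  | mem s hs => exact hq s hs
  | zero => simp
  | add _ _ _ _ h h' =>
    simp only [Prod.fst_add, Prod.snd_add, inner_add_right]
    linarith

end Polar

def complementarityCone : Set (ℝ × ℝ) := {p | 0 ≤ p.2 ∧ p.1 * p.2 = 0}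

theorem tangentConeSeq_complementarityCone_subset {a b : ℝ} (hab : a * b = 0) :
    tangentConeSeq complementarityCone (a, b) ⊆
      {d | (b = 0 → 0 ≤ d.2) ∧ b * d.1 + a * d.2 = 0} := by
  rintro d ⟨u, t, hu, ht, ht0, hd⟩
  have hu0 := tendsto_of_tendsto_inv_smul_sub (fun k => (ht k).ne') ht0 hd
  have hd1 : Tendsto (fun k => (t k)⁻¹ * ((u k).1 - a)) atTop (𝓝 d.1) :=
    (continuous_fst.tendsto d).comp hd
  have hd2 : Tendsto (fun k => (t k)⁻¹ * ((u k).2 - b)) atTop (𝓝 d.2) :=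
    (continuous_snd.tendsto d).comp hd
  refine ⟨fun hb => ge_of_tendsto' hd2 fun k => ?_, ?_⟩
  · subst hb
    exact mul_nonneg (inv_nonneg.2 (ht k).le) (by simpa using (hu k).1)
  · have hlim := (((continuous_snd.tendsto _).comp hu0).mul hd1).add (hd2.const_mul a)
    refine tendsto_nhds_unique hlim (tendsto_const_nhds.congr fun k => ?_)
    simp only [Function.comp_apply]
    linear_combination (-(t k)⁻¹) * (hu k).2 + (t k)⁻¹ * hab

theorem eventually_mem_complementarityCone_snd {b v : ℝ} (hb : 0 ≤ b) (hv : b = 0 → 0 ≤ v) :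
    ∀ᶠ t in 𝓝[>] (0 : ℝ), ((0 : ℝ), b + t * v) ∈ complementarityCone := by
  suffices ∀ᶠ t in 𝓝[>] (0 : ℝ), 0 ≤ b + t * v by
    simpa [complementarityCone] using this
  rcases hb.eq_or_lt with rfl | hb
  · filter_upwards [self_mem_nhdsWithin] with t (ht : 0 < t)
    nlinarith [hv rfl]
  · have : Tendsto (fun t : ℝ => b + t * v) (𝓝[>] 0) (𝓝 b) :=
      tendsto_nhdsWithin_of_tendsto_nhds <| by
        simpa using ((continuous_mul_const v).tendsto 0).const_add b
    exact this.eventually (le_mem_nhds hb)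

section Complementarity

variable {n : ℕ}

def complementaritySet (n : ℕ) : Set (EuclideanSpace ℝ (Fin n) × EuclideanSpace ℝ (Fin n)) :=
  {q | (∀ i, 0 ≤ q.2 i) ∧ (∀ i, q.1 i * q.2 i = 0)}

def complementarityLinCone (xb yb : EuclideanSpace ℝ (Fin n)) :
    Set (EuclideanSpace ℝ (Fin n) × EuclideanSpace ℝ (Fin n)) :=
  {d | (∀ i, yb i = 0 → 0 ≤ d.2 i) ∧ (∀ i, yb i * d.1 i + xb i * d.2 i = 0)}

theorem mem_complementaritySet_iff {q : EuclideanSpace ℝ (Fin n) × EuclideanSpace ℝ (Fin n)} :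
    q ∈ complementaritySet n ↔ ∀ i, (q.1 i, q.2 i) ∈ complementarityCone := by
  simp only [complementaritySet, complementarityCone, mem_ofPred_eq, forall_and]

def coordPair (i : Fin n) :
    EuclideanSpace ℝ (Fin n) × EuclideanSpace ℝ (Fin n) →L[ℝ] ℝ × ℝ :=
  (EuclideanSpace.proj i).prodMap (EuclideanSpace.proj i)

@[simp]
theorem coordPair_apply (i : Fin n) (q : EuclideanSpace ℝ (Fin n) × EuclideanSpace ℝ (Fin n)) :
    coordPair i q = (q.1 i, q.2 i) :=
  rfl

theorem tangentConeSeq_complementaritySet_subset {xb yb : EuclideanSpace ℝ (Fin n)}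
    (h : (xb, yb) ∈ complementaritySet n) :
    tangentConeSeq (complementaritySet n) (xb, yb) ⊆ complementarityLinCone xb yb := by
  intro d hd
  have key i : (d.1 i, d.2 i) ∈
      {e : ℝ × ℝ | (yb i = 0 → 0 ≤ e.2) ∧ yb i * e.1 + xb i * e.2 = 0} := by
    have hmaps : MapsTo (coordPair i) (complementaritySet n) complementarityCone := fun q hq => by
      simpa using mem_complementaritySet_iff.1 hq i
    simpa using tangentConeSeq_complementarityCone_subset (h.2 i)
      (mapsTo_tangentConeSeq (coordPair i) hmaps (xb, yb) hd)
  exact ⟨fun i => (key i).1, fun i => (key i).2⟩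

theorem single_mem_tangentConeSeq_complementaritySet {xb yb : EuclideanSpace ℝ (Fin n)}
    (h : (xb, yb) ∈ complementaritySet n) (i : Fin n) {u v : ℝ}
    (hi : ∀ᶠ t in 𝓝[>] (0 : ℝ), (xb i + t * u, yb i + t * v) ∈ complementarityCone) :
    (EuclideanSpace.single i u, EuclideanSpace.single i v) ∈
      tangentConeSeq (complementaritySet n) (xb, yb) := by
  refine mem_tangentConeSeq_of_eventually_add_smul_mem <| hi.mono fun t ht =>
    mem_complementaritySet_iff.2 fun j => ?_
  rcases eq_or_ne j i with rfl | hj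
  · simpa using ht
  · simpa [PiLp.single_apply, hj] using mem_complementaritySet_iff.1 h j

theorem complementarityLinCone_subset_closure {xb yb : EuclideanSpace ℝ (Fin n)}
    (h : (xb, yb) ∈ complementaritySet n) :
    complementarityLinCone xb yb ⊆
      AddSubmonoid.closure (tangentConeSeq (complementaritySet n) (xb, yb)) := by
  rintro d ⟨hd2, hd⟩
  have hmem i := mem_complementaritySet_iff.1 h i
  have hfst i : (EuclideanSpace.single i (d.1 i), EuclideanSpace.single i 0) ∈
      tangentConeSeq (complementaritySet n) (xb, yb) := by
    refine single_mem_tangentConeSeq_complementaritySet h i (Eventually.of_forall fun t => ?_)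
    by_cases hyi : yb i = 0
    · simp [complementarityCone, hyi]
    · have hxi : xb i = 0 := (mul_eq_zero.1 (hmem i).2).resolve_right hyi
      have : d.1 i = 0 := by simpa [hxi, hyi] using hd i
      simpa [this] using hmem i
  have hsnd i : (EuclideanSpace.single i 0, EuclideanSpace.single i (d.2 i)) ∈
      tangentConeSeq (complementaritySet n) (xb, yb) := by
    refine single_mem_tangentConeSeq_complementaritySet h i ?_
    by_cases hxi : xb i = 0
    · simpa [hxi] using eventually_mem_complementarityCone_snd (hmem i).1 (hd2 i)
    · have hyi : yb i = 0 := (mul_eq_zero.1 (hmem i).2).resolve_left hxi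
      have : d.2 i = 0 := by simpa [hxi, hyi] using hd i
      exact Eventually.of_forall fun t => by simpa [this] using hmem i
  have hsum : d = ∑ i, (EuclideanSpace.single i (d.1 i), EuclideanSpace.single i 0) +
      ∑ i, (EuclideanSpace.single i 0, EuclideanSpace.single i (d.2 i)) := by
    ext j <;> simp [Prod.fst_sum, Prod.snd_sum]
  rw [hsum]
  exact add_mem (sum_mem fun i _ => AddSubmonoid.subset_closure (hfst i))
    (sum_mem fun i _ => AddSubmonoid.subset_closure (hsnd i))

end Complementarity

/-- For `Ω = {(x,y) | y ≥ 0, x * y = 0}` and any `(x̄,ȳ) ∈ Ω`,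
Guignard's constraint qualification holds: `T_Ω(x̄,ȳ)° = D_Ω(x̄,ȳ)°`, where
`D_Ω(x̄,ȳ) = {(u,v) | vᵢ ≥ 0 whenever ȳᵢ = 0, and ȳᵢ uᵢ + x̄ᵢ vᵢ = 0 for all i}`. -/
theorem guignard_complementarity_constraints {n : ℕ}
    (xb yb : EuclideanSpace ℝ (Fin n))
    (hfeas : (∀ i, 0 ≤ yb i) ∧ (∀ i, xb i * yb i = 0)) :
    polarConeProd (tangentConeSeq
        {q : EuclideanSpace ℝ (Fin n) × EuclideanSpace ℝ (Fin n) |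
          (∀ i, 0 ≤ q.2 i) ∧ (∀ i, q.1 i * q.2 i = 0)} (xb, yb))
      = polarConeProd
        {d : EuclideanSpace ℝ (Fin n) × EuclideanSpace ℝ (Fin n) |
          (∀ i, yb i = 0 → 0 ≤ d.2 i) ∧ (∀ i, yb i * d.1 i + xb i * d.2 i = 0)} := by
  have h : (xb, yb) ∈ complementaritySet n := hfeas
  refine Subset.antisymm ?_ (polarConeProd_anti (tangentConeSeq_complementaritySet_subset h))
  exact (polarConeProd_addSubmonoidClosure _).superset.trans
    (polarConeProd_anti (complementarityLinCone_subset_closure h))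
end
end

section
/- Let (α^k) ⊆ [0, ∞) and (β^k) ⊆ ℝ be sequences such that α^k β^k → 0 and β^k → β̄ for some β̄ ≤ 0. Then min{−β^k, α^k} → 0. -/
open Filter Topology

/-- If `(αₖ) ⊆ [0, ∞)` and `(βₖ) ⊆ ℝ` are sequences with
`αₖ βₖ → 0` and `βₖ → β̄` for some `β̄ ≤ 0`, then `min {−βₖ, αₖ} → 0`. -/
theorem min_neg_tendsto_zero (a b : ℕ → ℝ) (hb : ∀ k, 0 ≤ a k)
    (bbar : ℝ) (hbbar : bbar ≤ 0)
    (hab : Tendsto (fun k => a k * b k) atTop (𝓝 0))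
    (hblim : Tendsto b atTop (𝓝 bbar)) :
    Tendsto (fun k => min (-(b k)) (a k)) atTop (𝓝 0) := by
  rcases eq_or_lt_of_le hbbar with h0 | hlt
  · -- bbar = 0 : squeeze |min| ≤ |b|
    subst h0
    have hbound : ∀ k, |min (-(b k)) (a k)| ≤ |b k| := by
      intro k
      rcases le_or_gt (a k) (-(b k)) with h | h
      · rw [min_eq_right h, abs_of_nonneg (hb k)]
        calc a k ≤ -(b k) := h
          _ ≤ |b k| := by rw [abs_eq_max_neg]; exact le_max_right _ _
      · rw [min_eq_left h.le, abs_neg]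
    have h1 : Tendsto (fun k => |b k|) atTop (𝓝 0) := by
      have := hblim.abs
      simpa using this
    refine squeeze_zero_norm (fun k => ?_) h1
    simpa using hbound k
  · -- bbar < 0 : a k → 0, min is continuous
    have hne : Tendsto b atTop (𝓝 bbar) := hblim
    have hevne : ∀ᶠ k in atTop, b k ≠ 0 := hblim.eventually_ne hlt.ne
    have hainv : Tendsto (fun k => (a k * b k) * (b k)⁻¹) atTop (𝓝 (0 * bbar⁻¹)) :=
      hab.mul (hblim.inv₀ hlt.ne)
    have ha : Tendsto a atTop (𝓝 0) := by
      rw [zero_mul] at hainv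
      refine hainv.congr' ?_
      filter_upwards [hevne] with k hk
      field_simp
    have := (hblim.neg).min ha
    rw [min_eq_right (by linarith)] at this
    exact this
end

section
/- Every CAKKT point of the nonlinear program (NLP) is an AKKT point of the NLP. -/
open Filter Topology

noncomputable section

abbrev E (n : ℕ) : Type := EuclideanSpace ℝ (Fin n)

/-- Gradient (in `x`) of the Lagrangian of the NLP
`min f(x) s.t. g(x) ≤ 0, h(x) = 0`:
`∇f(x) + Σᵢ λᵍᵢ ∇gᵢ(x) + Σⱼ λʰⱼ ∇hⱼ(x)`. -/
def gradLx {n m p : ℕ} (f : E n → ℝ) (g : E n → Fin m → ℝ) (h : E n → Fin p → ℝ)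
    (x : E n) (lg : Fin m → ℝ) (lh : Fin p → ℝ) : E n :=
  gradient f x + ∑ i, lg i • gradient (fun z => g z i) x
    + ∑ j, lh j • gradient (fun z => h z j) x

/-- `xb` is an AKKT point of the NLP `min f s.t. g ≤ 0, h = 0`
(feasibility included). -/
def AKKTpoint {n m p : ℕ} (f : E n → ℝ) (g : E n → Fin m → ℝ) (h : E n → Fin p → ℝ)
    (xb : E n) : Prop :=
  (∀ i, g xb i ≤ 0) ∧ (∀ j, h xb j = 0) ∧
  ∃ (x : ℕ → E n) (lg : ℕ → Fin m → ℝ) (lh : ℕ → Fin p → ℝ),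
    (∀ k i, 0 ≤ lg k i) ∧
    Tendsto x atTop (𝓝 xb) ∧
    Tendsto (fun k => gradLx f g h (x k) (lg k) (lh k)) atTop (𝓝 0) ∧
    (∀ i, Tendsto (fun k => min (-(g (x k) i)) (lg k i)) atTop (𝓝 0))

/-- `xb` is a CAKKT point of the NLP `min f s.t. g ≤ 0, h = 0`
(feasibility included). -/
def CAKKTpoint {n m p : ℕ} (f : E n → ℝ) (g : E n → Fin m → ℝ) (h : E n → Fin p → ℝ)
    (xb : E n) : Prop :=
  (∀ i, g xb i ≤ 0) ∧ (∀ j, h xb j = 0) ∧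
  ∃ (x : ℕ → E n) (lg : ℕ → Fin m → ℝ) (lh : ℕ → Fin p → ℝ),
    (∀ k i, 0 ≤ lg k i) ∧
    Tendsto x atTop (𝓝 xb) ∧
    Tendsto (fun k => gradLx f g h (x k) (lg k) (lh k)) atTop (𝓝 0) ∧
    (∀ i, Tendsto (fun k => lg k i * g (x k) i) atTop (𝓝 0)) ∧
    (∀ j, Tendsto (fun k => lh k j * h (x k) j) atTop (𝓝 0))

/-- Every CAKKT point of the NLP is an AKKT point of the NLP. -/
theorem CAKKT_implies_AKKT {n m p : ℕ}
    (f : E n → ℝ) (g : E n → Fin m → ℝ) (h : E n → Fin p → ℝ)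
    (hf : ContDiff ℝ 1 f) (hg : ∀ i, ContDiff ℝ 1 (fun x => g x i))
    (hh : ∀ j, ContDiff ℝ 1 (fun x => h x j))
    (xb : E n) (hca : CAKKTpoint f g h xb) : AKKTpoint f g h xb := by
  obtain ⟨hgf, hhf, x, lg, lh, hnn, hx, hgrad, hcg, _⟩ := hca
  refine ⟨hgf, hhf, x, lg, lh, hnn, hx, hgrad, ?_⟩
  intro i
  have hgc : Tendsto (fun k => g (x k) i) atTop (𝓝 (g xb i)) :=
    ((hg i).continuous.tendsto _).comp hx
  rcases lt_or_eq_of_le (hgf i) with hlt | heq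
  · -- g xb i < 0 : multipliers tend to 0
    have hne : g xb i ≠ 0 := ne_of_lt hlt
    have hlgt : Tendsto (fun k => lg k i) atTop (𝓝 0) := by
      have hdiv : Tendsto (fun k => lg k i * g (x k) i / g (x k) i) atTop
          (𝓝 (0 / g xb i)) := (hcg i).div hgc hne
      have hev : ∀ᶠ k in atTop, lg k i * g (x k) i / g (x k) i = lg k i := by
        filter_upwards [hgc (isOpen_ne.mem_nhds hne)] with k hk
        exact mul_div_cancel_right₀ _ hk
      simpa [zero_div] using hdiv.congr' hev
    have := (hgc.neg.min hlgt)
    have hmin : min (-g xb i) 0 = 0 := min_eq_right (by linarith)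
    simpa [hmin] using this
  · -- g xb i = 0 : squeeze
    have hgz : Tendsto (fun k => |g (x k) i|) atTop (𝓝 0) := by
      simpa [heq] using hgc.abs
    refine squeeze_zero_norm (fun k => ?_) hgz
    rcases le_total (lg k i) (-(g (x k) i)) with hle | hle
    · rw [min_eq_right hle]
      rw [Real.norm_eq_abs, abs_of_nonneg (hnn k i)]
      calc lg k i ≤ -(g (x k) i) := hle
        _ ≤ |g (x k) i| := by rw [abs_eq_max_neg]; exact le_max_right _ _
    · rw [min_eq_left hle]
      simp [Real.norm_eq_abs, abs_neg]
end
end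

section
/- Let (x̄, ȳ) be feasible for the relaxed MPCaC problem and let I be an index set with I_{0+} ∪ I_{01} ⊆ I ⊆ I_0. Then (x̄, ȳ) is W_I-stationary if and only if (x̄, ȳ) is a KKT point of the tightened problem TNLP_I(x̄, ȳ). -/
open Filter Topology
open scoped Classical

noncomputable section

/-- The constraint function `θ(y) = n − α − eᵀ y` of the relaxed MPCaC problem. -/
def theta {n : ℕ} (α : ℕ) (y : E n) : ℝ := (n : ℝ) - (α : ℝ) - ∑ i, y i

/-- Feasibility for the relaxed MPCaC problem:
`g(x) ≤ 0, h(x) = 0, θ(y) ≤ 0, xᵢ yᵢ = 0, 0 ≤ yᵢ ≤ 1`. -/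
def relFeas {n m p : ℕ} (g : E n → Fin m → ℝ) (h : E n → Fin p → ℝ) (α : ℕ)
    (x y : E n) : Prop :=
  (∀ i, g x i ≤ 0) ∧ (∀ j, h x j = 0) ∧ theta α y ≤ 0 ∧
  (∀ i, x i * y i = 0) ∧ (∀ i, 0 ≤ y i ∧ y i ≤ 1)

/-- `i ∈ I_{0+}(x̄,ȳ) ∪ I_{01}(x̄,ȳ)`, i.e. `x̄ᵢ = 0` and (`0 < ȳᵢ < 1` or `ȳᵢ = 1`). -/
def inI0p01 {n : ℕ} (xb yb : E n) (i : Fin n) : Prop :=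
  xb i = 0 ∧ ((0 < yb i ∧ yb i < 1) ∨ yb i = 1)

/-- Admissibility of the index set `I`: `I_{0+} ∪ I_{01} ⊆ I ⊆ I_0`. -/
def idxOK {n : ℕ} (xb yb : E n) (I : Finset (Fin n)) : Prop :=
  (∀ i, inI0p01 xb yb i → i ∈ I) ∧ (∀ i ∈ I, xb i = 0)

/-- Feasibility for the tightened problem `TNLP_I(x̄,ȳ)`:
`g(x) ≤ 0, h(x) = 0, θ(y) ≤ 0, xᵢ = 0 (i ∈ I), −yᵢ ≤ 0 (i ∈ I_{0+} ∪ I_{01}),`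
`−yᵢ = 0 (i ∈ I_{00} ∪ I_{±0}), y − e ≤ 0`. Note `I_{00} ∪ I_{±0} = {i | ȳᵢ = 0}`. -/
def tnlpFeas {n m p : ℕ} (g : E n → Fin m → ℝ) (h : E n → Fin p → ℝ) (α : ℕ)
    (xb yb : E n) (I : Finset (Fin n)) (x y : E n) : Prop :=
  (∀ i, g x i ≤ 0) ∧ (∀ j, h x j = 0) ∧ theta α y ≤ 0 ∧
  (∀ i ∈ I, x i = 0) ∧
  (∀ i, inI0p01 xb yb i → -(y i) ≤ 0) ∧
  (∀ i, yb i = 0 → -(y i) = 0) ∧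
  (∀ i, y i - 1 ≤ 0)

/-- `W_I`-stationarity for the relaxed MPCaC problem (Definition 2.9 of the paper). -/
def WStat {n m p : ℕ} (f : E n → ℝ) (g : E n → Fin m → ℝ) (h : E n → Fin p → ℝ)
    (α : ℕ) (xb yb : E n) (I : Finset (Fin n)) : Prop :=
  ∃ (lg : Fin m → ℝ) (lh : Fin p → ℝ) (lθ : ℝ) (lG : Fin n → ℝ) (lH lH' : Fin n → ℝ),
    (∀ i, 0 ≤ lg i) ∧ 0 ≤ lθ ∧ (∀ i, 0 ≤ lH' i) ∧
    gradLx f g h xb lg lh + ∑ i ∈ I, lG i • EuclideanSpace.single i 1 = 0 ∧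
    (∀ i, -lθ - lH i + lH' i = 0) ∧
    (∑ i, lg i * g xb i) = 0 ∧
    lθ * theta α yb = 0 ∧
    (∀ i, inI0p01 xb yb i → lH i = 0) ∧
    (∑ i, lH' i * (yb i - 1)) = 0

/-- Approximate weak (`AW`) stationarity for the relaxed MPCaC problem
(Definition 3.1 of the paper). -/
def AWStat {n m p : ℕ} (f : E n → ℝ) (g : E n → Fin m → ℝ) (h : E n → Fin p → ℝ)
    (α : ℕ) (xb yb : E n) : Prop :=
  ∃ (x y : ℕ → E n) (lg : ℕ → Fin m → ℝ) (lh : ℕ → Fin p → ℝ) (lθ : ℕ → ℝ)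
    (lG : ℕ → E n) (lH lH' : ℕ → Fin n → ℝ),
    (∀ k i, 0 ≤ lg k i) ∧ (∀ k, 0 ≤ lθ k) ∧ (∀ k i, 0 ≤ lH' k i) ∧
    Tendsto x atTop (𝓝 xb) ∧ Tendsto y atTop (𝓝 yb) ∧
    Tendsto (fun k => gradLx f g h (x k) (lg k) (lh k) + lG k) atTop (𝓝 0) ∧
    Tendsto (fun k i => -(lθ k) - lH k i + lH' k i) atTop (𝓝 (0 : Fin n → ℝ)) ∧
    (∀ i, Tendsto (fun k => min (-(g (x k) i)) (lg k i)) atTop (𝓝 0)) ∧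
    Tendsto (fun k => min (-(theta α (y k))) (lθ k)) atTop (𝓝 0) ∧
    (∀ i, Tendsto (fun k => min |x k i| |lG k i|) atTop (𝓝 0)) ∧
    (∀ i, Tendsto (fun k => min (y k i) |lH k i|) atTop (𝓝 0)) ∧
    (∀ i, Tendsto (fun k => min (1 - y k i) (lH' k i)) atTop (𝓝 0))

/-- KKT conditions for the tightened problem `TNLP_I(x̄,ȳ)` at `(x̄,ȳ)` itself:
nonnegative multipliers for the inequalities `g ≤ 0`, `θ ≤ 0`,
`−yᵢ ≤ 0 (i ∈ I_{0+} ∪ I_{01})`, `y − e ≤ 0`; free multipliers for the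
equalities `h = 0`, `xᵢ = 0 (i ∈ I)`, `−yᵢ = 0 (i ∈ I_{00} ∪ I_{±0})`;
vanishing gradient of the Lagrangian and complementarity `μᵀ c = 0`. -/
def KKT_TNLP {n m p : ℕ} (f : E n → ℝ) (g : E n → Fin m → ℝ) (h : E n → Fin p → ℝ)
    (α : ℕ) (xb yb : E n) (I : Finset (Fin n)) : Prop :=
  tnlpFeas g h α xb yb I xb yb ∧
  ∃ (μg : Fin m → ℝ) (νh : Fin p → ℝ) (μθ : ℝ) (νG : Fin n → ℝ)
    (μH νH : Fin n → ℝ) (μH' : Fin n → ℝ),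
    (∀ i, 0 ≤ μg i) ∧ 0 ≤ μθ ∧ (∀ i, inI0p01 xb yb i → 0 ≤ μH i) ∧
    (∀ i, 0 ≤ μH' i) ∧
    gradLx f g h xb μg νh + ∑ i ∈ I, νG i • EuclideanSpace.single i 1 = 0 ∧
    (∀ i, -μθ - (if inI0p01 xb yb i then μH i else 0)
        - (if yb i = 0 then νH i else 0) + μH' i = 0) ∧
    (∑ i, μg i * g xb i) + μθ * theta α yb
      + (∑ i, if inI0p01 xb yb i then μH i * (-(yb i)) else 0)
      + (∑ i, μH' i * (yb i - 1)) = 0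

/-- Proposition 2.11 of the paper. A feasible point `(x̄,ȳ)`
of the relaxed MPCaC problem is `W_I`-stationary iff it is a KKT point of the
tightened problem `TNLP_I(x̄,ȳ)`. -/
theorem WStat_iff_KKT_TNLP {n m p : ℕ}
    (f : E n → ℝ) (g : E n → Fin m → ℝ) (h : E n → Fin p → ℝ) (α : ℕ)
    (hf : ContDiff ℝ 1 f) (hg : ∀ i, ContDiff ℝ 1 (fun x => g x i))
    (hh : ∀ j, ContDiff ℝ 1 (fun x => h x j)) (hα : 0 < α) (hαn : α < n)
    (xb yb : E n) (hfeas : relFeas g h α xb yb)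
    (I : Finset (Fin n)) (hI : idxOK xb yb I) :
    WStat f g h α xb yb I ↔ KKT_TNLP f g h α xb yb I := by
  obtain ⟨hg0, hh0, hθ0, hxy, hy01⟩ := hfeas
  -- every index is either in I_{0+} ∪ I_{01} or has ȳᵢ = 0
  have hcases : ∀ i : Fin n, inI0p01 xb yb i ∨ yb i = 0 := by
    intro i
    by_cases h2 : yb i = 0
    · exact Or.inr h2
    · left
      have hy0 : 0 < yb i := lt_of_le_of_ne (hy01 i).1 (Ne.symm h2)
      have hx0 : xb i = 0 := by
        by_contra hx
        exact h2 (by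
          have := hxy i
          rcases mul_eq_zero.mp this with h | h
          · exact absurd h hx
          · exact h)
      refine ⟨hx0, ?_⟩
      rcases lt_or_eq_of_le (hy01 i).2 with h1 | h1
      · exact Or.inl ⟨hy0, h1⟩
      · exact Or.inr h1
  have hne0 : ∀ i : Fin n, inI0p01 xb yb i → yb i ≠ 0 := by
    intro i hi
    rcases hi.2 with ⟨h1, _⟩ | h1
    · exact ne_of_gt h1
    · rw [h1]; norm_num
  constructor
  · rintro ⟨lg, lh, lθ, lG, lH, lH', hlg, hlθ, hlH', hgrad, heq, hcg, hcθ, hH0, hcH'⟩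
    refine ⟨⟨hg0, hh0, hθ0, hI.2, ?_, ?_, ?_⟩,
      lg, lh, lθ, lG, lH, lH, lH', hlg, hlθ, ?_, hlH', hgrad, ?_, ?_⟩
    · intro i hi; linarith [(hy01 i).1]
    · intro i hi; rw [hi]; ring
    · intro i; linarith [(hy01 i).2]
    · intro i hi; rw [hH0 i hi]
    · intro i
      rcases hcases i with h1 | h2
      · rw [if_pos h1, if_neg (hne0 i h1)]
        linarith [heq i]
      · have h1 : ¬ inI0p01 xb yb i := fun hc => hne0 i hc h2
        rw [if_neg h1, if_pos h2]
        linarith [heq i]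
    · have hz : (∑ i, if inI0p01 xb yb i then lH i * (-(yb i)) else 0) = 0 := by
        apply Finset.sum_eq_zero
        intro i _
        by_cases h1 : inI0p01 xb yb i
        · rw [if_pos h1, hH0 i h1]; ring
        · rw [if_neg h1]
      rw [hcg, hcθ, hz, hcH']; ring
  · rintro ⟨-, μg, νh, μθ, νG, μH, νH, μH', hμg, hμθ, hμH, hμH', hgrad, heq, hcomp⟩
    have hS3term : ∀ i ∈ (Finset.univ : Finset (Fin n)),
        (if inI0p01 xb yb i then μH i * (-(yb i)) else 0) ≤ 0 := by
      intro i _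
      by_cases h1 : inI0p01 xb yb i
      · rw [if_pos h1]
        have hy : 0 < yb i := lt_of_le_of_ne (hy01 i).1 (Ne.symm (hne0 i h1))
        have := hμH i h1
        nlinarith
      · rw [if_neg h1]
    have hS1 : (∑ i, μg i * g xb i) ≤ 0 :=
      Finset.sum_nonpos fun i _ => mul_nonpos_of_nonneg_of_nonpos (hμg i) (hg0 i)
    have hS2 : μθ * theta α yb ≤ 0 := mul_nonpos_of_nonneg_of_nonpos hμθ hθ0
    have hS3 : (∑ i, if inI0p01 xb yb i then μH i * (-(yb i)) else 0) ≤ 0 :=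
      Finset.sum_nonpos hS3term
    have hS4 : (∑ i, μH' i * (yb i - 1)) ≤ 0 :=
      Finset.sum_nonpos fun i _ =>
        mul_nonpos_of_nonneg_of_nonpos (hμH' i) (by linarith [(hy01 i).2])
    have e1 : (∑ i, μg i * g xb i) = 0 := by linarith
    have e2 : μθ * theta α yb = 0 := by linarith
    have e3 : (∑ i, if inI0p01 xb yb i then μH i * (-(yb i)) else 0) = 0 := by linarith
    have e4 : (∑ i, μH' i * (yb i - 1)) = 0 := by linarith
    have hμH0 : ∀ i, inI0p01 xb yb i → μH i = 0 := by
      intro i hi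
      have hterm := (Finset.sum_eq_zero_iff_of_nonpos hS3term).mp e3 i (Finset.mem_univ i)
      rw [if_pos hi] at hterm
      have hy : 0 < yb i := lt_of_le_of_ne (hy01 i).1 (Ne.symm (hne0 i hi))
      rcases mul_eq_zero.mp hterm with h | h
      · exact h
      · exact absurd (neg_eq_zero.mp h) (hne0 i hi)
    refine ⟨μg, νh, μθ, νG,
      fun i => (if inI0p01 xb yb i then μH i else 0) + (if yb i = 0 then νH i else 0),
      μH', hμg, hμθ, hμH', hgrad, ?_, e1, e2, ?_, e4⟩
    · intro i; dsimp only; linarith [heq i]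
    · intro i hi; dsimp only
      rw [if_pos hi, if_neg (hne0 i hi), hμH0 i hi]; ring
end
end

section
/- Suppose (x̄, ȳ) is a KKT point of the relaxed MPCaC problem, viewed as a standard nonlinear program with inequality constraints g(x) ≤ 0, θ(y) ≤ 0, −y ≤ 0, y − e ≤ 0 and equality constraints h(x) = 0 and x_i y_i = 0 (i = 1,…,n). Then for every index set I with I_{0+} ∪ I_{01} ⊆ I ⊆ I_0, the pair (x̄, ȳ) is W_I-stationary. -/
open Filter Topology
open scoped Classical

noncomputable section

/-- KKT conditions for the relaxed MPCaC problem viewed as a standard NLP with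
inequality constraints `g(x) ≤ 0`, `θ(y) ≤ 0`, `−y ≤ 0`, `y − e ≤ 0` and
equality constraints `h(x) = 0`, `xᵢ yᵢ = 0 (i = 1,…,n)`. -/
def KKT_relaxed {n m p : ℕ} (f : E n → ℝ) (g : E n → Fin m → ℝ)
    (h : E n → Fin p → ℝ) (α : ℕ) (xb yb : E n) : Prop :=
  relFeas g h α xb yb ∧
  ∃ (μg : Fin m → ℝ) (νh : Fin p → ℝ) (μθ : ℝ) (μH μH' : Fin n → ℝ)
    (νξ : Fin n → ℝ),
    (∀ i, 0 ≤ μg i) ∧ 0 ≤ μθ ∧ (∀ i, 0 ≤ μH i) ∧ (∀ i, 0 ≤ μH' i) ∧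
    -- gradient in x: ∇f + ∇g μg + ∇h νh + Σᵢ νξᵢ ȳᵢ eᵢ = 0
    gradLx f g h xb μg νh + ∑ i, (νξ i * yb i) • EuclideanSpace.single i 1 = 0 ∧
    -- gradient in y: −μθ e − μH + μH' + νξ * x̄ = 0
    (∀ i, -μθ - μH i + μH' i + νξ i * xb i = 0) ∧
    -- complementarity μᵀ c = 0 over all inequality constraints
    (∑ i, μg i * g xb i) + μθ * theta α yb + (∑ i, μH i * (-(yb i)))
      + (∑ i, μH' i * (yb i - 1)) = 0

/-- Theorem 2.12 of the paper. If `(x̄,ȳ)` is a KKT point of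
the relaxed MPCaC problem, then `(x̄,ȳ)` is `W_I`-stationary for every index
set `I` with `I_{0+} ∪ I_{01} ⊆ I ⊆ I_0`. -/
theorem KKT_relaxed_implies_WStat {n m p : ℕ}
    (f : E n → ℝ) (g : E n → Fin m → ℝ) (h : E n → Fin p → ℝ) (α : ℕ)
    (hf : ContDiff ℝ 1 f) (hg : ∀ i, ContDiff ℝ 1 (fun x => g x i))
    (hh : ∀ j, ContDiff ℝ 1 (fun x => h x j)) (hα : 0 < α) (hαn : α < n)
    (xb yb : E n) (hkkt : KKT_relaxed f g h α xb yb) :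
    ∀ I : Finset (Fin n), idxOK xb yb I → WStat f g h α xb yb I := by
  rintro I ⟨hI1, hI2⟩
  obtain ⟨⟨hgf, hhf, hθf, hxy, hy01⟩, μg, νh, μθ, μH, μH', νξ, hμg, hμθ, hμH, hμH',
    hgrad, hgrady, hcomp⟩ := hkkt
  have hA : ∑ i, μg i * g xb i ≤ 0 :=
    Finset.sum_nonpos fun i _ => mul_nonpos_of_nonneg_of_nonpos (hμg i) (hgf i)
  have hB : μθ * theta α yb ≤ 0 := mul_nonpos_of_nonneg_of_nonpos hμθ hθf
  have hC : ∑ i, μH i * (-(yb i)) ≤ 0 :=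
    Finset.sum_nonpos fun i _ =>
      mul_nonpos_of_nonneg_of_nonpos (hμH i) (by linarith [(hy01 i).1])
  have hD : ∑ i, μH' i * (yb i - 1) ≤ 0 :=
    Finset.sum_nonpos fun i _ =>
      mul_nonpos_of_nonneg_of_nonpos (hμH' i) (by linarith [(hy01 i).2])
  have hA0 : ∑ i, μg i * g xb i = 0 := by linarith
  have hB0 : μθ * theta α yb = 0 := by linarith
  have hC0 : ∑ i, μH i * (-(yb i)) = 0 := by linarith
  have hD0 : ∑ i, μH' i * (yb i - 1) = 0 := by linarith
  have hCz : ∀ i, μH i * yb i = 0 := by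
    intro i
    have := (Finset.sum_eq_zero_iff_of_nonpos (fun i _ =>
      mul_nonpos_of_nonneg_of_nonpos (hμH i) (by linarith [(hy01 i).1]))).mp hC0
      i (Finset.mem_univ i)
    linarith
  -- off I, yb i = 0
  have hyb0 : ∀ i, i ∉ I → yb i = 0 := by
    intro i hi
    by_cases hx : xb i = 0
    · by_contra hne
      have h0 : 0 < yb i := lt_of_le_of_ne (hy01 i).1 (Ne.symm hne)
      exact hi (hI1 i ⟨hx, by
        rcases lt_or_eq_of_le (hy01 i).2 with h1 | h1
        · exact Or.inl ⟨h0, h1⟩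
        · exact Or.inr h1⟩)
    · have := hxy i
      rcases mul_eq_zero.mp this with h' | h'
      · exact absurd h' hx
      · exact h'
  refine ⟨μg, νh, μθ, fun i => νξ i * yb i, fun i => μH i - νξ i * xb i, μH',
    hμg, hμθ, hμH', ?_, ?_, hA0, hB0, ?_, hD0⟩
  · have hsum : ∑ i ∈ I, (νξ i * yb i) • EuclideanSpace.single i (1 : ℝ)
        = ∑ i, (νξ i * yb i) • EuclideanSpace.single i (1 : ℝ) := by
      refine Finset.sum_subset I.subset_univ (fun i _ hi => ?_)
      simp [hyb0 i hi]
    rw [hsum]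
    exact hgrad
  · intro i
    show -μθ - (μH i - νξ i * xb i) + μH' i = 0
    linarith [hgrady i]
  · rintro i ⟨hx0, hcase⟩
    have hypos : 0 < yb i := by
      rcases hcase with ⟨h1, _⟩ | h1
      · exact h1
      · rw [h1]; norm_num
    have : μH i = 0 := by
      rcases mul_eq_zero.mp (hCz i) with h' | h'
      · exact h'
      · exact absurd h' (ne_of_gt hypos)
    simp [this, hx0]
end
end

section
/- Consider the relaxed MPCaC problem in ℝ³ with f(x) = x₁, one inequality constraint g(x) = (1 − x₁)³ + x₃² ≤ 0, no equality constraints, and α = 2 (so θ(y) = 1 − y₁ − y₂ − y₃). Then the pair (x*, y*) with x* = (1, 0, 0) and y* = (0, 1, 0) is a global minimizer of this relaxed problem, and yet (x*, y*) is not W_I-stationary for any index set I with I_{0+} ∪ I_{01} ⊆ I ⊆ I_0 (here the only admissible sets are I = {2} and I = {2, 3}). -/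
open Filter Topology
open scoped Classical

noncomputable section

/-- Objective of the example: `f(x) = x₁`. -/
def fEx : E 3 → ℝ := fun x => x 0

/-- Inequality constraint of the example: `g(x) = (1 − x₁)³ + x₃² ≤ 0`. -/
def gEx : E 3 → Fin 1 → ℝ := fun x _ => (1 - x 0) ^ 3 + (x 2) ^ 2

/-- No equality constraints. -/
def hEx : E 3 → Fin 0 → ℝ := fun _ j => Fin.elim0 j

/-- `x* = (1, 0, 0)`. -/
def xStar : E 3 := !₂[1, 0, 0]

/-- `y* = (0, 1, 0)`. -/
def yStar : E 3 := !₂[0, 1, 0]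

/-
At `x* = (1, 0, 0)` both summands of `g(x) = (1 − x₁)³ + x₃²` are critical, so `∇g(x*) = 0`,
while `∇f(x*) = e₁`. Since `x*₁ ≠ 0`, the index `1` never lies in an admissible `I ⊆ I₀`, so the
first coordinate of the `W_I`-stationarity equation reads `1 = 0`. Minimality is elementary:
`g(x) ≤ 0` forces `(1 − x₁)³ ≤ 0`, i.e. `x₁ ≥ 1`.
-/

theorem HasGradientAt.add {F : Type*} [NormedAddCommGroup F] [InnerProductSpace ℝ F]
    [CompleteSpace F] {f g : F → ℝ} {f' g' x : F} (hf : HasGradientAt f f' x)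
    (hg : HasGradientAt g g' x) : HasGradientAt (fun z => f z + g z) (f' + g') x := by
  rw [hasGradientAt_iff_hasFDerivAt, map_add]
  exact hf.hasFDerivAt.add hg.hasFDerivAt

theorem hasGradientAt_comp_apply {ι : Type*} [Fintype ι] [DecidableEq ι] {φ : ℝ → ℝ} {φ' : ℝ}
    {x : EuclideanSpace ℝ ι} (i : ι) (hφ : HasDerivAt φ φ' (x i)) :
    HasGradientAt (fun z : EuclideanSpace ℝ ι => φ (z i)) (φ' • EuclideanSpace.single i 1) x := by
  refine (hφ.comp_hasFDerivAt x (EuclideanSpace.proj (𝕜 := ℝ) i).hasFDerivAt).congr_fderiv ?_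
  ext v
  simp [EuclideanSpace.inner_single_left]

theorem sum_smul_single_apply_of_notMem {ι : Type*} [Fintype ι] [DecidableEq ι]
    {I : Finset ι} (c : ι → ℝ) {j : ι} (hj : j ∉ I) :
    (∑ i ∈ I, c i • EuclideanSpace.single i (1 : ℝ)) j = 0 := by
  simp [Pi.single_apply, hj]

theorem idxOK.notMem_of_ne_zero {n : ℕ} {xb yb : E n} {I : Finset (Fin n)}
    (hI : idxOK xb yb I) {j : Fin n} (hj : xb j ≠ 0) : j ∉ I :=
  fun hjI => hj (hI.2 j hjI)

theorem WStat.exists_gradLx_apply_eq_zero {n m p : ℕ} {f : E n → ℝ} {g : E n → Fin m → ℝ}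
    {h : E n → Fin p → ℝ} {α : ℕ} {xb yb : E n} {I : Finset (Fin n)}
    (hW : WStat f g h α xb yb I) :
    ∃ lg lh, ∀ j ∉ I, gradLx f g h xb lg lh j = 0 := by
  obtain ⟨lg, lh, -, lG, -, -, -, -, -, hgrad, -⟩ := hW
  refine ⟨lg, lh, fun j hj => ?_⟩
  simpa [sum_smul_single_apply_of_notMem lG hj] using congrArg (· j) hgrad

theorem one_le_of_one_sub_pow_three_add_sq_nonpos {a b : ℝ} (h : (1 - a) ^ 3 + b ^ 2 ≤ 0) :
    1 ≤ a := by
  have hcube : (1 - a) ^ 3 ≤ 0 := by nlinarith [sq_nonneg b]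
  linarith [(Odd.pow_nonpos_iff (by decide : Odd 3)).1 hcube]

theorem relFeas_xStar_yStar : relFeas gEx hEx 2 xStar yStar := by
  refine ⟨fun _ => ?_, fun j => j.elim0, ?_, fun i => ?_, fun i => ?_⟩
  · norm_num [gEx, xStar, Matrix.cons_val_two]
  · norm_num [theta, yStar, Fin.sum_univ_three, Matrix.cons_val_two]
  · fin_cases i <;> simp [xStar, yStar]
  · fin_cases i <;> norm_num [yStar, Matrix.cons_val_two]

theorem gradient_fEx (x : E 3) : gradient fEx x = EuclideanSpace.single 0 1 := by
  have hgrad := (hasGradientAt_comp_apply (x := x) (φ := id) 0 (hasDerivAt_id _)).gradient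
  rwa [one_smul] at hgrad

theorem hasGradientAt_gEx_xStar (i : Fin 1) : HasGradientAt (fun z => gEx z i) 0 xStar := by
  have h₀ : HasDerivAt (fun t : ℝ => (1 - t) ^ 3) 0 (xStar 0) := by
    simpa [xStar] using ((hasDerivAt_id' (xStar 0)).const_sub 1).fun_pow 3
  have h₂ : HasDerivAt (fun t : ℝ => t ^ 2) 0 (xStar 2) := by
    simpa [xStar] using (hasDerivAt_id' (xStar 2)).fun_pow 2
  have hg := (hasGradientAt_comp_apply 0 h₀).add (hasGradientAt_comp_apply 2 h₂)
  rwa [zero_smul, zero_smul, add_zero] at hg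

theorem gradLx_ex_xStar (lg : Fin 1 → ℝ) (lh : Fin 0 → ℝ) :
    gradLx fEx gEx hEx xStar lg lh = EuclideanSpace.single 0 1 := by
  simp [gradLx, gradient_fEx, fun i => (hasGradientAt_gEx_xStar i).gradient]

/-- Example 2.13 of the paper. For the relaxed MPCaC problem
in `ℝ³` with `f(x) = x₁`, `g(x) = (1 − x₁)³ + x₃² ≤ 0`, no equality
constraints and `α = 2`, the pair `(x*, y*) = ((1,0,0), (0,1,0))` is a global
minimizer of the relaxed problem, yet it is not `W_I`-stationary for any
admissible index set `I` (with `I_{0+} ∪ I_{01} ⊆ I ⊆ I_0`). -/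
theorem example_global_min_not_WStat :
    (relFeas gEx hEx 2 xStar yStar ∧
      ∀ x y, relFeas gEx hEx 2 x y → fEx xStar ≤ fEx x) ∧
    (∀ I : Finset (Fin 3), idxOK xStar yStar I →
      ¬ WStat fEx gEx hEx 2 xStar yStar I) := by
  refine ⟨⟨relFeas_xStar_yStar, fun x y hxy => ?_⟩, fun I hI hW => ?_⟩
  · have hx : 1 ≤ x 0 := one_le_of_one_sub_pow_three_add_sq_nonpos (hxy.1 0)
    simpa [fEx, xStar] using hx
  · obtain ⟨lg, lh, hzero⟩ := hW.exists_gradLx_apply_eq_zero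
    have h0I : (0 : Fin 3) ∉ I := hI.notMem_of_ne_zero (by simp [xStar])
    simpa [gradLx_ex_xStar] using hzero 0 h0I
end
end

section
/- Consider the relaxed MPCaC problem in ℝ³ with f(x) = x₁, one inequality constraint g(x) = (1 − x₁)³ + x₃² ≤ 0, no equality constraints, and α = 2 (so θ(y) = 1 − y₁ − y₂ − y₃). Then the pair (x*, y*) with x* = (1, 0, 0) and y* = (0, 1, 0) is AW-stationary. -/
open Filter Topology
open scoped Classical

noncomputable section

/-!
The point `x*` is not KKT, because `∇g(x*) = 0` while `∇f(x*) = e₁`. It is nevertheless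
AW-stationary: along the infeasible points `x* − t e₁` (`t → 0⁺`) one has
`∇g = −3t² e₁`, so the multiplier `λᵍ = 1/(3t²)` makes `∇f + λᵍ∇g` vanish exactly, while
`g = t³ → 0` forces `min(−g, λᵍ) → 0` even though `λᵍ → ∞`. The variable `y` is frozen at the
feasible `y*`, and every other multiplier is `0`.
-/

theorem AWStat_of_tendsto_gradLx {n m p : ℕ} {f : E n → ℝ} {g : E n → Fin m → ℝ}
    {h : E n → Fin p → ℝ} {α : ℕ} {xb yb : E n} (x : ℕ → E n) (lg : ℕ → Fin m → ℝ)
    (lh : ℕ → Fin p → ℝ) (hlg : ∀ k i, 0 ≤ lg k i) (hx : Tendsto x atTop (𝓝 xb))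
    (hgrad : Tendsto (fun k => gradLx f g h (x k) (lg k) (lh k)) atTop (𝓝 0))
    (hcompl : ∀ i, Tendsto (fun k => min (-(g (x k) i)) (lg k i)) atTop (𝓝 0))
    (hθ : theta α yb ≤ 0) (hy : ∀ i, 0 ≤ yb i ∧ yb i ≤ 1) :
    AWStat f g h α xb yb := by
  refine ⟨x, fun _ => yb, lg, lh, fun _ => 0, fun _ => 0, fun _ _ => 0, fun _ _ => 0, hlg,
    fun _ => le_rfl, fun _ _ => le_rfl, hx, tendsto_const_nhds, by simpa using hgrad, ?_, hcompl,
    ?_, fun i => ?_, fun i => ?_, fun i => ?_⟩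
  · exact tendsto_const_nhds.congr fun _ => by ext; simp
  · simp [min_eq_right (neg_nonneg.2 hθ)]
  · simp
  · simp [min_eq_right (hy i).1]
  · simp [min_eq_right (sub_nonneg.2 (hy i).2)]

theorem gradient_gEx (x : E 3) : gradient (fun z => gEx z 0) x
    = EuclideanSpace.single 0 (-3 * (1 - x 0) ^ 2) + EuclideanSpace.single 2 (2 * x 2) := by
  apply HasGradientAt.gradient
  rw [hasGradientAt_iff_hasFDerivAt]
  have hcube := (hasDerivAt_pow 3 (1 - x 0)).comp_hasFDerivAt x
    ((EuclideanSpace.proj (0 : Fin 3) : E 3 →L[ℝ] ℝ).hasFDerivAt.const_sub (1 : ℝ))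
  have hsq := (hasDerivAt_pow 2 (x 2)).comp_hasFDerivAt x
    (EuclideanSpace.proj (2 : Fin 3) : E 3 →L[ℝ] ℝ).hasFDerivAt
  refine HasFDerivAt.congr_fderiv (hcube.add hsq) ?_
  ext w
  simp [InnerProductSpace.toDual_apply_apply, EuclideanSpace.inner_single_left]

theorem theta_yStar : theta 2 yStar = 0 := by
  norm_num [theta, yStar, Fin.sum_univ_three, Matrix.cons_val_two]

theorem yStar_nonneg_and_le_one (i : Fin 3) : 0 ≤ yStar i ∧ yStar i ≤ 1 := by
  fin_cases i <;> norm_num [yStar, Matrix.cons_val_two]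

theorem gEx_sub_smul_single (t : ℝ) (i : Fin 1) :
    gEx (xStar - t • EuclideanSpace.single 0 1) i = t ^ 3 := by
  simp [gEx, xStar]

theorem gradLx_sub_smul_single {t : ℝ} (ht : t ≠ 0) :
    gradLx fEx gEx hEx (xStar - t • EuclideanSpace.single 0 1) (fun _ => 1 / (3 * t ^ 2))
      (fun _ => 0) = 0 := by
  ext i
  fin_cases i <;> simp [gradLx, gradient_fEx, gradient_gEx, xStar]
  field_simp
  norm_num

/-- Example 3.2 of the paper. For the relaxed MPCaC problem
in `ℝ³` with `f(x) = x₁`, `g(x) = (1 − x₁)³ + x₃² ≤ 0`, no equality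
constraints and `α = 2`, the pair `(x*, y*) = ((1,0,0), (0,1,0))` is
`AW`-stationary. -/
theorem example_AWStat : AWStat fEx gEx hEx 2 xStar yStar := by
  set t : ℕ → ℝ := fun k => 1 / ((k : ℝ) + 1)
  have ht : Tendsto t atTop (𝓝 0) := tendsto_one_div_add_atTop_nhds_zero_nat
  have ht_pos : ∀ k, 0 < t k := fun k => by positivity
  refine AWStat_of_tendsto_gradLx (fun k => xStar - t k • EuclideanSpace.single 0 1)
    (fun k _ => 1 / (3 * t k ^ 2)) (fun _ _ => 0) (fun k _ => by positivity) ?_ ?_ (fun i => ?_)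
    theta_yStar.le yStar_nonneg_and_le_one
  · simpa using tendsto_const_nhds.sub (ht.smul_const (EuclideanSpace.single (0 : Fin 3) (1 : ℝ)))
  · simp only [gradLx_sub_smul_single (ht_pos _).ne']
    exact tendsto_const_nhds
  · have hmin : ∀ k, min (-(t k ^ 3)) (1 / (3 * t k ^ 2)) = -(t k ^ 3) := fun k =>
      min_eq_left ((neg_nonpos.2 (pow_pos (ht_pos k) 3).le).trans (by positivity))
    simp only [gEx_sub_smul_single, hmin]
    simpa using (ht.pow 3).neg
end
end

section
/- Let (x̄, ȳ) be a W_I-stationary point of the relaxed MPCaC problem, for some index set I with I_{0+} ∪ I_{01} ⊆ I ⊆ I_0. Then (x̄, ȳ) is AW-stationary for this problem. -/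
open Filter Topology
open scoped Classical

noncomputable section

/-!
A `W_I`-stationary point satisfies the `AW` conditions exactly, so the constant sequences
`(x̄, ȳ)` and the `W_I`-multipliers witness `AW`-stationarity, with `λᴳ := Σ_{i∈I} λᴳᵢ eᵢ`.
Each `min` condition vanishes because one of its two arguments is zero: for `g` and `y − e`
the total complementarity `Σ λᵢ cᵢ = 0` of sign-definite terms forces every term to vanish;
`λᴳ` lives on `I ⊆ I₀`; and `ȳᵢ > 0` forces `x̄ᵢ = 0`, so `i ∈ I_{0+} ∪ I_{01}` and `λᴴᵢ = 0`.
-/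

theorem min_eq_zero_of_mul_eq_zero {R : Type*} [MulZeroClass R] [NoZeroDivisors R]
    [LinearOrder R] {a b : R} (ha : 0 ≤ a) (hb : 0 ≤ b) (hab : a * b = 0) : min a b = 0 := by
  rcases mul_eq_zero.mp hab with rfl | rfl
  · exact min_eq_left hb
  · exact min_eq_right ha

theorem min_neg_eq_zero_of_sum_mul_eq_zero {ι : Type*} [Fintype ι] {u v : ι → ℝ}
    (hu : ∀ i, 0 ≤ u i) (hv : ∀ i, v i ≤ 0) (hsum : ∑ i, u i * v i = 0) (i : ι) :
    min (-v i) (u i) = 0 := by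
  have hterm : ∀ j ∈ Finset.univ, 0 ≤ -(u j * v j) := fun j _ =>
    neg_nonneg.mpr (mul_nonpos_of_nonneg_of_nonpos (hu j) (hv j))
  have hzero : -(u i * v i) = 0 :=
    (Finset.sum_eq_zero_iff_of_nonneg hterm).mp
      (by rw [Finset.sum_neg_distrib, hsum, neg_zero]) i (Finset.mem_univ i)
  exact min_eq_zero_of_mul_eq_zero (neg_nonneg.mpr (hv i)) (hu i) (by linarith)

theorem EuclideanSpace.sum_smul_single_one_apply {ι : Type*} [Fintype ι] [DecidableEq ι]
    (I : Finset ι) (c : ι → ℝ) (i : ι) :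
    (∑ j ∈ I, c j • EuclideanSpace.single j (1 : ℝ)) i = if i ∈ I then c i else 0 := by
  simp [Pi.single_apply]

theorem AWStat_of_exact {n m p : ℕ} {f : E n → ℝ} {g : E n → Fin m → ℝ} {h : E n → Fin p → ℝ}
    {α : ℕ} {xb yb : E n} (lg : Fin m → ℝ) (lh : Fin p → ℝ) (lθ : ℝ) (lG : E n)
    (lH lH' : Fin n → ℝ) (hlg : ∀ i, 0 ≤ lg i) (hlθ : 0 ≤ lθ) (hlH' : ∀ i, 0 ≤ lH' i)
    (hgrad : gradLx f g h xb lg lh + lG = 0) (hdual : ∀ i, -lθ - lH i + lH' i = 0)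
    (hg : ∀ i, min (-(g xb i)) (lg i) = 0) (hθ : min (-(theta α yb)) lθ = 0)
    (hG : ∀ i, min |xb i| |lG i| = 0) (hH : ∀ i, min (yb i) |lH i| = 0)
    (hH' : ∀ i, min (1 - yb i) (lH' i) = 0) :
    AWStat f g h α xb yb := by
  have hdual' : (fun (_ : ℕ) i => -lθ - lH i + lH' i) = fun _ => 0 :=
    funext fun _ => funext hdual
  refine ⟨fun _ => xb, fun _ => yb, fun _ => lg, fun _ => lh, fun _ => lθ, fun _ => lG,
    fun _ => lH, fun _ => lH', fun _ => hlg, fun _ => hlθ, fun _ => hlH',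
    tendsto_const_nhds, tendsto_const_nhds, ?_, hdual' ▸ tendsto_const_nhds, fun i => ?_, ?_,
    fun i => ?_, fun i => ?_, fun i => ?_⟩ <;>
  simp only [hgrad, hg, hθ, hG, hH, hH'] <;> exact tendsto_const_nhds

/-- Lemma 3.4 of the paper. If `(x̄,ȳ)` is a
`W_I`-stationary point of the relaxed MPCaC problem, for some index set `I`
with `I_{0+} ∪ I_{01} ⊆ I ⊆ I_0`, then `(x̄,ȳ)` is `AW`-stationary. -/
theorem WStat_implies_AWStat {n m p : ℕ}
    (f : E n → ℝ) (g : E n → Fin m → ℝ) (h : E n → Fin p → ℝ) (α : ℕ)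
    (xb yb : E n) (hfeas : relFeas g h α xb yb)
    (I : Finset (Fin n)) (hI : idxOK xb yb I)
    (hW : WStat f g h α xb yb I) :
    AWStat f g h α xb yb := by
  obtain ⟨hg, -, hθ, hxy, hy⟩ := hfeas
  obtain ⟨lg, lh, lθ, lG, lH, lH', hlg, hlθ, hlH', hgrad, hdual, hcompg, hcompθ, hH0, hcompH'⟩ :=
    hW
  refine AWStat_of_exact lg lh lθ (∑ i ∈ I, lG i • EuclideanSpace.single i 1) lH lH'
    hlg hlθ hlH' hgrad hdual
    (min_neg_eq_zero_of_sum_mul_eq_zero hlg hg hcompg)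
    (min_eq_zero_of_mul_eq_zero (by linarith) hlθ (by linarith [hcompθ]))
    (fun i => ?_) (fun i => ?_) (fun i => ?_)
  · rw [EuclideanSpace.sum_smul_single_one_apply]
    split_ifs with hi
    · simp [hI.2 i hi]
    · simp
  · rcases (hy i).1.eq_or_lt with hyi | hyi
    · simp [← hyi]
    · have hxi : xb i = 0 := (mul_eq_zero.mp (hxy i)).resolve_right hyi.ne'
      have hi : inI0p01 xb yb i := ⟨hxi, (hy i).2.lt_or_eq.imp (⟨hyi, ·⟩) id⟩
      simp [hH0 i hi, hyi.le]
  · simpa only [neg_sub] using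
      min_neg_eq_zero_of_sum_mul_eq_zero hlH' (fun j => sub_nonpos.mpr (hy j).2) hcompH' i
end
end

section
/- Suppose (x*, y*) is a local minimizer of the relaxed MPCaC problem and set w* = (x*, y*). Then, given an arbitrary norm ‖·‖ on ℝ^n × ℝ^n × ℝ^{2n}, there exists δ > 0 such that (x*, y*, w*) is the unique global minimizer of the localized proximal problem: minimize f(x) + (1/2)‖(x, y) − (x*, y*)‖₂² over (x, y, w) subject to g(x) ≤ 0, h(x) = 0, θ(y) ≤ 0, w^G − x = 0, w^H − y = 0, y − e ≤ 0, w ∈ W, and ‖(x, y, w) − (x*, y*, w*)‖ ≤ δ. -/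
open Filter Topology
open scoped Classical

noncomputable section

/-- Feasibility for the augmented problem: `g(x) ≤ 0`, `h(x) = 0`, `θ(y) ≤ 0`,
`w^G − G(x) = 0` (i.e. `w^G = x`), `w^H + H(y) = 0` (i.e. `w^H = y`),
`y − e ≤ 0`, and `w ∈ W = {(w^G, w^H) | w^H ≥ 0, w^G_i w^H_i = 0 ∀ i}`. -/
def augFeas {n m p : ℕ} (g : E n → Fin m → ℝ) (h : E n → Fin p → ℝ) (α : ℕ)
    (x y wG wH : E n) : Prop :=
  (∀ i, g x i ≤ 0) ∧ (∀ j, h x j = 0) ∧ theta α y ≤ 0 ∧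
  wG - x = 0 ∧ wH - y = 0 ∧ (∀ i, y i - 1 ≤ 0) ∧
  (∀ i, 0 ≤ wH i) ∧ (∀ i, wG i * wH i = 0)

/-! With `w = (x, y)`, the constraint `w ∈ W` of the augmented problem is exactly the
complementarity `xᵢ yᵢ = 0, y ≥ 0` of the relaxed problem, so augmented feasible points are
relaxed feasible points. Any norm on the finite-dimensional space `ℝⁿ × ℝⁿ × ℝ²ⁿ` dominates a
multiple of the sup norm, so a small `nrm`-ball around `(x*, y*, w*)` projects into the
neighbourhood where `(x*, y*)` is a local minimizer; there `f x* ≤ f x`, and the proximal term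
`½‖(x, y) − (x*, y*)‖²` makes the inequality strict away from `(x*, y*)`. -/

theorem Seminorm.exists_pos_mul_norm_le {V : Type*} [NormedAddCommGroup V] [NormedSpace ℝ V]
    [FiniteDimensional ℝ V] (q : Seminorm ℝ V) (hq : ∀ v, q v = 0 → v = 0) :
    ∃ c > 0, ∀ v, c * ‖v‖ ≤ q v := by
  rcases subsingleton_or_nontrivial V with hV | hV
  · exact ⟨1, one_pos, fun v => by simp [Subsingleton.elim v 0]⟩
  obtain ⟨z, hz, hzmin⟩ := (isCompact_sphere (0 : V) 1).exists_isMinOn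
    (NormedSpace.sphere_nonempty.mpr zero_le_one)
    q.convexOn.locallyLipschitz.continuous.continuousOn
  have hz1 : ‖z‖ = 1 := by simpa using hz
  refine ⟨q z, (apply_nonneg q z).lt_of_ne fun h => ?_, fun v => ?_⟩
  · simp [hq z h.symm] at hz1
  rcases eq_or_ne v 0 with rfl | hv
  · simp
  have hv' : 0 < ‖v‖ := norm_pos_iff.mpr hv
  have hmin : q z ≤ q (‖v‖⁻¹ • v) := hzmin (by simp [norm_smul, hv'.ne'])
  rw [map_smul_eq_mul, norm_inv, norm_norm, inv_mul_eq_div, le_div_iff₀ hv'] at hmin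
  linarith

theorem norm_prod_mk_le_norm_prod_mk_prod {α β γ : Type*} [SeminormedAddCommGroup α]
    [SeminormedAddCommGroup β] [SeminormedAddCommGroup γ] (a : α) (b : β) (c : γ) :
    ‖(a, b)‖ ≤ ‖(a, b, c)‖ :=
  max_le_max le_rfl (norm_fst_le (b, c))

theorem sq_norm_add_sq_norm_pos {α β : Type*} [NormedAddCommGroup α] [NormedAddCommGroup β]
    {a : α} {b : β} (h : (a, b) ≠ 0) : 0 < ‖a‖ ^ 2 + ‖b‖ ^ 2 := by
  by_cases ha : a = 0
  · have hb : b ≠ 0 := fun hb => h (by simp [ha, hb])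
    have := norm_pos_iff.mpr hb
    positivity
  · have := norm_pos_iff.mpr ha
    positivity

theorem augFeas_self_of_relFeas {n m p : ℕ} {g : E n → Fin m → ℝ} {h : E n → Fin p → ℝ}
    {α : ℕ} {x y : E n} (hxy : relFeas g h α x y) : augFeas g h α x y x y := by
  obtain ⟨hg, hh, hθ, hcompl, hy⟩ := hxy
  exact ⟨hg, hh, hθ, sub_self x, sub_self y, fun i => sub_nonpos.mpr (hy i).2,
    fun i => (hy i).1, hcompl⟩

theorem augFeas.eq_and_relFeas {n m p : ℕ} {g : E n → Fin m → ℝ} {h : E n → Fin p → ℝ}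
    {α : ℕ} {x y wG wH : E n} (hw : augFeas g h α x y wG wH) :
    wG = x ∧ wH = y ∧ relFeas g h α x y := by
  obtain ⟨hg, hh, hθ, hwG, hwH, hy1, hwH0, hcompl⟩ := hw
  obtain rfl := sub_eq_zero.mp hwG
  obtain rfl := sub_eq_zero.mp hwH
  exact ⟨rfl, rfl, hg, hh, hθ, hcompl, fun i => ⟨hwH0 i, sub_nonpos.mp (hy1 i)⟩⟩

theorem relaxed_min_unique_proximal_min_general {n m p : ℕ}
    (f : E n → ℝ) (g : E n → Fin m → ℝ) (h : E n → Fin p → ℝ) (α : ℕ)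
    (nrm : (E n × E n × E n × E n) → ℝ)
    (hnrm0 : ∀ v, nrm v = 0 ↔ v = 0)
    (hnrm1 : ∀ (c : ℝ) v, nrm (c • v) = |c| * nrm v)
    (hnrm2 : ∀ u v, nrm (u + v) ≤ nrm u + nrm v)
    (xs ys : E n)
    (hloc : (relFeas g h α xs ys) ∧ ∃ δ > (0:ℝ), ∀ x y, relFeas g h α x y →
      ‖(x, y) - (xs, ys)‖ ≤ δ → f xs ≤ f x) :
    ∃ δ > (0:ℝ),
      (augFeas g h α xs ys xs ys ∧
        nrm ((xs, ys, xs, ys) - (xs, ys, xs, ys)) ≤ δ) ∧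
      ∀ x y wG wH, augFeas g h α x y wG wH →
        nrm ((x, y, wG, wH) - (xs, ys, xs, ys)) ≤ δ →
        (x, y, wG, wH) ≠ (xs, ys, xs, ys) →
        f xs + (1/2) * (‖xs - xs‖ ^ 2 + ‖ys - ys‖ ^ 2)
          < f x + (1/2) * (‖x - xs‖ ^ 2 + ‖y - ys‖ ^ 2) := by
  obtain ⟨hfeas, δ₀, hδ₀, hmin⟩ := hloc
  obtain ⟨c, hc, hnorm_le⟩ := (Seminorm.of nrm hnrm2 hnrm1).exists_pos_mul_norm_le
    fun v => (hnrm0 v).mp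
  refine ⟨c * δ₀, by positivity,
    ⟨augFeas_self_of_relFeas hfeas, by simp [(hnrm0 0).mpr rfl]; positivity⟩, ?_⟩
  intro x y wG wH hw hnrm hne
  obtain ⟨rfl, rfl, hrel⟩ := hw.eq_and_relFeas
  have hclose : ‖(wG, wH) - (xs, ys)‖ ≤ δ₀ := by
    have := hnorm_le ((wG, wH, wG, wH) - (xs, ys, xs, ys))
    exact (norm_prod_mk_le_norm_prod_mk_prod (wG - xs) (wH - ys) (wG - xs, wH - ys)).trans
      (le_of_mul_le_mul_left (this.trans hnrm) hc)
  have hmoved : (wG - xs, wH - ys) ≠ 0 := fun h0 => hne (by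
    simp only [Prod.mk_eq_zero, sub_eq_zero] at h0
    rw [h0.1, h0.2])
  simp only [sub_self, norm_zero]
  linarith [hmin wG wH hrel hclose, sq_norm_add_sq_norm_pos hmoved]

/-- Lemma 3.7 of the paper. If `(x*, y*)` is a local
minimizer of the relaxed MPCaC problem and `w* = (x*, y*)`, then for an
arbitrary norm `nrm` on `ℝⁿ × ℝⁿ × ℝ²ⁿ` there exists `δ > 0` such that
`(x*, y*, w*)` is the unique global minimizer of the localized proximal
problem: minimize `f(x) + ½‖(x,y) − (x*,y*)‖₂²` subject to the augmented
constraints and `nrm((x,y,w) − (x*,y*,w*)) ≤ δ`. -/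
theorem relaxed_min_unique_proximal_min {n m p : ℕ}
    (f : E n → ℝ) (g : E n → Fin m → ℝ) (h : E n → Fin p → ℝ) (α : ℕ)
    (hf : ContDiff ℝ 1 f) (hg : ∀ i, ContDiff ℝ 1 (fun x => g x i))
    (hh : ∀ j, ContDiff ℝ 1 (fun x => h x j))
    (nrm : (E n × E n × E n × E n) → ℝ)
    (hnrm0 : ∀ v, nrm v = 0 ↔ v = 0)
    (hnrm1 : ∀ (c : ℝ) v, nrm (c • v) = |c| * nrm v)
    (hnrm2 : ∀ u v, nrm (u + v) ≤ nrm u + nrm v)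
    (xs ys : E n)
    (hloc : (relFeas g h α xs ys) ∧ ∃ δ > (0:ℝ), ∀ x y, relFeas g h α x y →
      ‖(x, y) - (xs, ys)‖ ≤ δ → f xs ≤ f x) :
    ∃ δ > (0:ℝ),
      (augFeas g h α xs ys xs ys ∧
        nrm ((xs, ys, xs, ys) - (xs, ys, xs, ys)) ≤ δ) ∧
      ∀ x y wG wH, augFeas g h α x y wG wH →
        nrm ((x, y, wG, wH) - (xs, ys, xs, ys)) ≤ δ →
        (x, y, wG, wH) ≠ (xs, ys, xs, ys) →
        f xs + (1/2) * (‖xs - xs‖ ^ 2 + ‖ys - ys‖ ^ 2)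
          < f x + (1/2) * (‖x - xs‖ ^ 2 + ‖y - ys‖ ^ 2) :=
  relaxed_min_unique_proximal_min_general f g h α nrm hnrm0 hnrm1 hnrm2 xs ys hloc
end
end

section
/- If (x*, y*) is a local minimizer of the relaxed MPCaC problem, then (x*, y*) is an AW-stationary point of this problem. -/
/-!
With `y` frozen at `ys`, the point `xs` is a local minimizer of the nonlinear program
`g(x) ≤ 0, h(x) = 0, xᵢ = 0 (ysᵢ ≠ 0)`, because every such `x` keeps `(x, ys)` feasible.
For that program the quadratic penalty method yields an AKKT sequence: minimizers of
`f + ρₖ · penalty + ‖· - xs‖²` over a small closed ball converge to `xs` (the proximal term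
singles out `xs` among the cluster points) and are therefore eventually interior critical points.
Keeping `yᵏ = ys`, all multipliers of the `y`-constraints zero and `λ^{G,k}` the negated
Lagrangian gradient turns it into an AW-stationarity sequence: coordinates with `ysᵢ ≠ 0` have
`xᵢᵏ → 0`, and on the remaining ones the Lagrangian gradient itself tends to zero.
-/

open Filter Topology
open scoped Classical

noncomputable section

open Metric

theorem hasDerivAt_max_zero_sq (t : ℝ) :
    HasDerivAt (fun s : ℝ => max s 0 ^ 2) (2 * max t 0) t := by
  rcases lt_trichotomy t 0 with ht | rfl | ht
  · refine (hasDerivAt_const t (0 : ℝ)).congr_of_eventuallyEq ?_ |>.congr_deriv (by simp [ht.le])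
    filter_upwards [eventually_lt_nhds ht] with s hs
    simp [hs.le]
  · rw [hasDerivAt_iff_isLittleO_nhds_zero]
    simp only [zero_add, max_self, ne_eq, OfNat.ofNat_ne_zero, not_false_eq_true, zero_pow,
      sub_zero, mul_zero, smul_zero]
    refine (Asymptotics.IsBigO.of_bound 1 (Eventually.of_forall fun s => ?_)).trans_isLittleO
      (Asymptotics.isLittleO_pow_id one_lt_two)
    simp only [norm_pow, Real.norm_eq_abs, one_mul]
    exact pow_le_pow_left₀ (abs_nonneg _)
      (by rcases le_total s 0 with hs | hs <;> simp [hs, abs_nonneg]) 2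
  · refine (hasDerivAt_pow 2 t).congr_of_eventuallyEq ?_ |>.congr_deriv (by simp [ht.le])
    filter_upwards [eventually_gt_nhds ht] with s hs
    simp [hs.le]

theorem min_neg_mul_max_zero {ρ t : ℝ} (hρ : 0 ≤ ρ) :
    min (-t) (ρ * (2 * max t 0)) = -max t 0 := by
  rcases le_total t 0 with ht | ht
  · simp [ht]
  · rw [max_eq_left ht]
    exact min_eq_left (by nlinarith [mul_nonneg hρ ht])

section Penalty

variable {V ι κ : Type*} [Fintype ι] [Fintype κ] {g : ι → V → ℝ} {h : κ → V → ℝ}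

def sqPenalty (g : ι → V → ℝ) (h : κ → V → ℝ) (x : V) : ℝ :=
  ∑ i, max (g i x) 0 ^ 2 + ∑ j, h j x ^ 2

theorem sqPenalty_nonneg (x : V) : 0 ≤ sqPenalty g h x := by
  unfold sqPenalty
  positivity

theorem sqPenalty_eq_zero_iff {x : V} :
    sqPenalty g h x = 0 ↔ (∀ i, g i x ≤ 0) ∧ ∀ j, h j x = 0 := by
  simp [sqPenalty, add_eq_zero_iff_of_nonneg, Finset.sum_nonneg, sq_nonneg,
    Finset.sum_eq_zero_iff_of_nonneg]

theorem continuous_sqPenalty [TopologicalSpace V] (hg : ∀ i, Continuous (g i))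
    (hh : ∀ j, Continuous (h j)) : Continuous (sqPenalty g h) := by
  unfold sqPenalty
  fun_prop

theorem hasFDerivAt_sqPenalty [NormedAddCommGroup V] [NormedSpace ℝ V] {x : V}
    {g' : ι → V →L[ℝ] ℝ} {h' : κ → V →L[ℝ] ℝ}
    (hg : ∀ i, HasFDerivAt (g i) (g' i) x) (hh : ∀ j, HasFDerivAt (h j) (h' j) x) :
    HasFDerivAt (sqPenalty g h) (∑ i, (2 * max (g i x) 0) • g' i + ∑ j, (2 * h j x) • h' j) x :=
  (HasFDerivAt.fun_sum fun i _ => (hasDerivAt_max_zero_sq _).comp_hasFDerivAt x (hg i)).add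
    (HasFDerivAt.fun_sum fun j _ => by simpa [two_smul, two_mul] using (hh j).pow 2)

end Penalty

theorem tendsto_of_penalized_le {X : Type*} [NormedAddCommGroup X] [ProperSpace X]
    {f P : X → ℝ} {xs : X} {r : ℝ} {ρ : ℕ → ℝ} {x : ℕ → X}
    (hf : Continuous f) (hP : Continuous P) (hP0 : ∀ z, 0 ≤ P z)
    (hmin : ∀ z ∈ closedBall xs r, P z = 0 → f xs ≤ f z)
    (hρ : Tendsto ρ atTop atTop) (hx : ∀ k, x k ∈ closedBall xs r)
    (hle : ∀ k, f (x k) + ρ k * P (x k) + ‖x k - xs‖ ^ 2 ≤ f xs) :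
    Tendsto x atTop (𝓝 xs) := by
  obtain ⟨c, hc⟩ := (isCompact_closedBall xs r).bddBelow_image hf.continuousOn
  have hρpos : ∀ᶠ k in atTop, 0 < ρ k := hρ.eventually_gt_atTop 0
  have hPx : Tendsto (fun k => P (x k)) atTop (𝓝 0) := by
    refine squeeze_zero' (Eventually.of_forall fun k => hP0 _) ?_
      ((tendsto_const_nhds (x := f xs - c)).div_atTop hρ)
    filter_upwards [hρpos] with k hk
    rw [le_div_iff₀' hk]
    nlinarith [hle k, hc ⟨x k, hx k, rfl⟩]
  refine (isCompact_closedBall xs r).tendsto_nhds_of_unique_mapClusterPt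
    (Eventually.of_forall hx) fun xh hxh hcl => ?_
  obtain ⟨ψ, hψ, hxψ⟩ := hcl.tendsto_subseq
  have hPxh : P xh = 0 :=
    tendsto_nhds_unique ((hP.tendsto xh).comp hxψ) (hPx.comp hψ.tendsto_atTop)
  have hle' : f xh + ‖xh - xs‖ ^ 2 ≤ f xs := by
    have hcont : Continuous fun z => f z + ‖z - xs‖ ^ 2 := by fun_prop
    refine le_of_tendsto ((hcont.tendsto xh).comp hxψ) ?_
    filter_upwards [hψ.tendsto_atTop.eventually hρpos] with k hk
    simp only [Function.comp_apply]
    nlinarith [hle (ψ k), hP0 (x (ψ k))]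
  have := hmin xh hxh hPxh
  rw [← sub_eq_zero, ← norm_eq_zero]
  nlinarith [norm_nonneg (xh - xs)]

section ApproxKKT

open InnerProductSpace

variable {V ι κ : Type*} [Fintype ι] [Fintype κ] [NormedAddCommGroup V] [InnerProductSpace ℝ V]
  {f : V → ℝ} {g : ι → V → ℝ} {h : κ → V → ℝ}

theorem gradient_penalized_eq_of_isLocalMin [CompleteSpace V] {ρ : ℝ} {xs z : V}
    (hz : IsLocalMin (fun x => f x + ρ * sqPenalty g h x + ‖x - xs‖ ^ 2) z)
    (hf : DifferentiableAt ℝ f z) (hg : ∀ i, DifferentiableAt ℝ (g i) z)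
    (hh : ∀ j, DifferentiableAt ℝ (h j) z) :
    gradient f z + ∑ i, (ρ * (2 * max (g i z) 0)) • gradient (g i) z
      + ∑ j, (ρ * (2 * h j z)) • gradient (h j) z = -((2 : ℝ) • (z - xs)) := by
  have h0 := hz.hasFDerivAt_eq_zero <| (hf.hasFDerivAt.add
    ((hasFDerivAt_sqPenalty (fun i => (hg i).hasFDerivAt)
      fun j => (hh j).hasFDerivAt).const_mul ρ)).add ((hasFDerivAt_id z).sub_const xs).norm_sq
  apply (toDual ℝ V).injective
  ext w
  have := congr($h0 w)
  simp only [map_add, map_sum, map_smul, map_neg, toDual_gradient, toDual_apply_apply, add_apply,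
    smul_apply, sum_apply, zero_apply, neg_apply, ContinuousLinearMap.comp_id, coe_innerSL_apply,
    smul_add, smul_eq_mul, nsmul_eq_mul, Nat.cast_ofNat, mul_assoc, Finset.mul_sum, id_eq] at this ⊢
  linarith

theorem exists_approxKKT_seq_of_isLocalMinOn [FiniteDimensional ℝ V] (hf : Differentiable ℝ f)
    (hg : ∀ i, Differentiable ℝ (g i)) (hh : ∀ j, Differentiable ℝ (h j)) {xs : V}
    (hxs : xs ∈ {x | (∀ i, g i x ≤ 0) ∧ ∀ j, h j x = 0})
    (hmin : IsLocalMinOn f {x | (∀ i, g i x ≤ 0) ∧ ∀ j, h j x = 0} xs) :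
    ∃ (x : ℕ → V) (lg : ℕ → ι → ℝ) (lh : ℕ → κ → ℝ), (∀ k i, 0 ≤ lg k i) ∧
      Tendsto x atTop (𝓝 xs) ∧
      Tendsto (fun k => gradient f (x k) + ∑ i, lg k i • gradient (g i) (x k)
        + ∑ j, lh k j • gradient (h j) (x k)) atTop (𝓝 0) ∧
      ∀ i, Tendsto (fun k => min (-g i (x k)) (lg k i)) atTop (𝓝 0) := by
  obtain ⟨r, hr, hrmin⟩ := (nhds_basis_closedBall.inf_principal _).eventually_iff.1 hmin
  set ρ : ℕ → ℝ := fun k => k + 1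
  set F : ℕ → V → ℝ := fun k z => f z + ρ k * sqPenalty g h z + ‖z - xs‖ ^ 2
  have hPc := continuous_sqPenalty (fun i => (hg i).continuous) fun j => (hh j).continuous
  have hFc : ∀ k, Continuous (F k) := fun k => by
    have := hf.continuous
    fun_prop
  have hxsB : xs ∈ closedBall xs r := mem_closedBall_self hr.le
  choose x hxB hxmin using fun k =>
    (isCompact_closedBall xs r).exists_isMinOn ⟨xs, hxsB⟩ (hFc k).continuousOn
  have hx : Tendsto x atTop (𝓝 xs) :=
    tendsto_of_penalized_le hf.continuous hPc sqPenalty_nonneg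
      (fun z hz hz0 => hrmin ⟨hz, sqPenalty_eq_zero_iff.1 hz0⟩)
      (tendsto_atTop_add_const_right _ 1 tendsto_natCast_atTop_atTop) hxB
      fun k => (hxmin k hxsB).trans_eq (by simp [F, sqPenalty_eq_zero_iff.2 hxs])
  refine ⟨x, fun k i => ρ k * (2 * max (g i (x k)) 0), fun k j => ρ k * (2 * h j (x k)),
    fun k i => by positivity, hx, ?_, fun i => ?_⟩
  · have hstat : ∀ᶠ k in atTop, -((2 : ℝ) • (x k - xs)) = gradient f (x k)
        + ∑ i, (ρ k * (2 * max (g i (x k)) 0)) • gradient (g i) (x k)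
        + ∑ j, (ρ k * (2 * h j (x k))) • gradient (h j) (x k) := by
      filter_upwards [hx (ball_mem_nhds xs hr)] with k hk
      exact (gradient_penalized_eq_of_isLocalMin ((hxmin k).isLocalMin (mem_of_superset
        (isOpen_ball.mem_nhds hk) ball_subset_closedBall)) (hf _) (hg · _) (hh · _)).symm
    refine Tendsto.congr' hstat ?_
    simpa using ((hx.sub_const xs).const_smul (2 : ℝ)).neg
  · have hcont : Continuous fun z => -max (g i z) 0 := by
      have := (hg i).continuous
      fun_prop
    have hlim : Tendsto (fun z => -max (g i z) 0) (𝓝 xs) (𝓝 0) := by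
      simpa [hxs.1 i] using hcont.tendsto xs
    exact (hlim.comp hx).congr fun k => (min_neg_mul_max_zero (by positivity)).symm

end ApproxKKT

section EuclideanSpace

variable {ι : Type*} [Fintype ι] [DecidableEq ι]

theorem gradient_coord (i : ι) (z : EuclideanSpace ℝ ι) :
    gradient (fun x : EuclideanSpace ℝ ι => x i) z = EuclideanSpace.single i 1 := by
  have hdual : InnerProductSpace.toDual ℝ _ (EuclideanSpace.single i 1) =
      EuclideanSpace.proj i := by
    ext v
    simp [EuclideanSpace.inner_single_left]
  refine HasGradientAt.gradient ?_
  rw [hasGradientAt_iff_hasFDerivAt, hdual]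
  exact (EuclideanSpace.proj i : EuclideanSpace ℝ ι →L[ℝ] ℝ).hasFDerivAt

theorem tendsto_min_abs_of_tendsto_add_sum_single {P : ι → Prop} [DecidablePred P]
    {x v : ℕ → EuclideanSpace ℝ ι} {ν : ℕ → {i // P i} → ℝ}
    (hx : ∀ i, P i → Tendsto (fun k => x k i) atTop (𝓝 0))
    (hv : Tendsto (fun k => v k + ∑ i, ν k i • EuclideanSpace.single (i : ι) (1 : ℝ))
      atTop (𝓝 0)) (i : ι) :
    Tendsto (fun k => min |x k i| |v k i|) atTop (𝓝 0) := by
  by_cases hi : P i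
  · exact squeeze_zero (fun k => by positivity) (fun k => min_le_left _ _)
      (by simpa using (hx i hi).abs)
  · have hvi : Tendsto (fun k => v k i) atTop (𝓝 0) := by
      have := ((EuclideanSpace.proj i : EuclideanSpace ℝ ι →L[ℝ] ℝ).continuous.tendsto 0).comp hv
      have hne : ∀ j : {i // P i}, (j : ι) ≠ i := fun j hj => hi (hj ▸ j.2)
      simpa [Function.comp_def, Pi.single_apply, hne, eq_comm (a := i)] using this
    exact squeeze_zero (fun k => by positivity) (fun k => min_le_right _ _)
      (by simpa using hvi.abs)

end EuclideanSpace

theorem relFeas.of_fixed_y {n m p : ℕ} {g : E n → Fin m → ℝ} {h : E n → Fin p → ℝ} {α : ℕ}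
    {xs ys x : E n} (hfeas : relFeas g h α xs ys) (hg : ∀ i, g x i ≤ 0) (hh : ∀ j, h x j = 0)
    (hx : ∀ i, ys i ≠ 0 → x i = 0) : relFeas g h α x ys := by
  obtain ⟨-, -, hθ, -, hy⟩ := hfeas
  refine ⟨hg, hh, hθ, fun i => ?_, hy⟩
  by_cases hi : ys i = 0 <;> simp [hi, hx]

theorem AWStat.of_const_y {n m p : ℕ} {f : E n → ℝ} {g : E n → Fin m → ℝ}
    {h : E n → Fin p → ℝ} {α : ℕ} {xs ys : E n} (hθ : theta α ys ≤ 0)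
    (hy : ∀ i, 0 ≤ ys i ∧ ys i ≤ 1) {x : ℕ → E n} {lg : ℕ → Fin m → ℝ} {lh : ℕ → Fin p → ℝ}
    (hlg : ∀ k i, 0 ≤ lg k i) (hx : Tendsto x atTop (𝓝 xs))
    (hcompl : ∀ i, Tendsto (fun k => min (-(g (x k) i)) (lg k i)) atTop (𝓝 0))
    (hG : ∀ i, Tendsto (fun k => min |x k i| |gradLx f g h (x k) (lg k) (lh k) i|) atTop (𝓝 0)) :
    AWStat f g h α xs ys := by
  refine ⟨x, fun _ => ys, lg, lh, fun _ => 0, fun k => -gradLx f g h (x k) (lg k) (lh k),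
    fun _ _ => 0, fun _ _ => 0, hlg, fun _ => le_rfl, fun _ _ => le_rfl, hx, tendsto_const_nhds,
    by simp, ?_, hcompl, ?_, fun i => ?_, fun i => ?_, fun i => ?_⟩
  · simp only [neg_zero, sub_self, add_zero]
    exact tendsto_const_nhds
  · simp [min_eq_right (neg_nonneg.2 hθ)]
  · simpa using hG i
  · simp [(hy i).1]
  · simp [(hy i).2]

theorem local_min_implies_AWStat_general {n m p : ℕ}
    (f : E n → ℝ) (g : E n → Fin m → ℝ) (h : E n → Fin p → ℝ) (α : ℕ)
    (hf : ContDiff ℝ 1 f) (hg : ∀ i, ContDiff ℝ 1 (fun x => g x i))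
    (hh : ∀ j, ContDiff ℝ 1 (fun x => h x j))
    (xs ys : E n)
    (hloc : (relFeas g h α xs ys) ∧ ∃ δ > (0:ℝ), ∀ x y, relFeas g h α x y →
      ‖(x, y) - (xs, ys)‖ ≤ δ → f xs ≤ f x) :
    AWStat f g h α xs ys := by
  obtain ⟨hfeas, δ, hδ, hmin⟩ := hloc
  have ⟨hg0, hh0, hθ, hxy, hy⟩ := hfeas
  -- equality constraints of the program in `x` obtained by freezing `y = ys`
  let c : Fin p ⊕ {i // ys i ≠ 0} → E n → ℝ := Sum.elim (fun j x => h x j) fun i x => x i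
  have hxs : ∀ i, ys i ≠ 0 → xs i = 0 := fun i hi => (mul_eq_zero.1 (hxy i)).resolve_right hi
  have hS : IsLocalMinOn f {x | (∀ i, g x i ≤ 0) ∧ ∀ j, c j x = 0} xs := by
    refine mem_of_superset (inter_mem_nhdsWithin _ (closedBall_mem_nhds xs hδ)) ?_
    rintro x ⟨⟨hgx, hcx⟩, hx⟩
    exact hmin x ys (hfeas.of_fixed_y hgx (fun j => hcx (.inl j)) fun i hi => hcx (.inr ⟨i, hi⟩))
      (by simpa [Prod.norm_def, dist_eq_norm] using hx)
  obtain ⟨x, lg, lc, hlg, hx, hgrad, hcompl⟩ := exists_approxKKT_seq_of_isLocalMinOn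
    (g := fun i x => g x i) (h := c) (hf.differentiable one_ne_zero)
    (fun i => (hg i).differentiable one_ne_zero)
    (Sum.rec (fun j => (hh j).differentiable one_ne_zero)
      fun i => (EuclideanSpace.proj (i : Fin n) : E n →L[ℝ] ℝ).differentiable)
    ⟨hg0, Sum.rec hh0 fun i => hxs i i.2⟩ hS
  refine AWStat.of_const_y (lh := fun k j => lc k (.inl j)) hθ hy hlg hx hcompl
    (tendsto_min_abs_of_tendsto_add_sum_single (ν := fun k i => lc k (.inr i)) (fun i hi => ?_) ?_)
  · have hxi := ((EuclideanSpace.proj i : E n →L[ℝ] ℝ).continuous.tendsto xs).comp hx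
    simpa [hxs i hi, Function.comp_def] using hxi
  · simpa [gradLx, c, Fintype.sum_sum_type, gradient_coord, add_assoc] using hgrad

/-- Theorem 3.8 of the paper, the main result. If
`(x*, y*)` is a local minimizer of the relaxed MPCaC problem, then `(x*, y*)`
is an `AW`-stationary point of this problem. -/
theorem local_min_implies_AWStat {n m p : ℕ}
    (f : E n → ℝ) (g : E n → Fin m → ℝ) (h : E n → Fin p → ℝ) (α : ℕ)
    (hf : ContDiff ℝ 1 f) (hg : ∀ i, ContDiff ℝ 1 (fun x => g x i))
    (hh : ∀ j, ContDiff ℝ 1 (fun x => h x j)) (hα : 0 < α) (hαn : α < n)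
    (xs ys : E n)
    (hloc : (relFeas g h α xs ys) ∧ ∃ δ > (0:ℝ), ∀ x y, relFeas g h α x y →
      ‖(x, y) - (xs, ys)‖ ≤ δ → f xs ≤ f x) :
    AWStat f g h α xs ys :=
  local_min_implies_AWStat_general f g h α hf hg hh xs ys hloc
end
end

section
/- Every feasible pair (x̄, ȳ) of the relaxed MPCaC problem is an AKKT point of that problem viewed as a standard nonlinear program. That is, for every feasible (x̄, ȳ) there exist sequences (x^k, y^k) → (x̄, ȳ) and multipliers (μ^{g,k}, μ^{h,k}, μ^{θ,k}, μ^{H,k}, μ^{H̃,k}, μ^{ξ,k}) ⊆ ℝ₊^m × ℝ^p × ℝ₊ × ℝ₊^n × ℝ₊^n × ℝ^n such that ∇f(x^k) + ∇g(x^k)μ^{g,k} + ∇h(x^k)μ^{h,k} + μ^{ξ,k} * y^k → 0, −μ^{θ,k} e − μ^{H,k} + μ^{H̃,k} + μ^{ξ,k} * x^k → 0, min{−g_i(x^k), μ_i^{g,k}} → 0 for all i, min{−θ(y^k), μ^{θ,k}} → 0, min{y_i^k, μ_i^{H,k}} → 0 for all i, and min{1 − y_i^k, μ_i^{H̃,k}}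 → 0 for all i. -/
/-! Keep `x̄` fixed and move only the zero coordinates of `ȳ`, to `±tₖ` with `tₖ → 0`. Every
coordinate of `yᵏ` is then nonzero, so `μᵏ_ξ,ᵢ := -∂ᵢf(x̄) / yᵏᵢ` cancels `∇f(x̄)` exactly in the
`x`-gradient, and `μᵏ_H := μᵏ_ξ * x̄` cancels `μᵏ_ξ * x̄` in the `y`-gradient. The sign of the shift
makes `μᵏ_H ≥ 0`, and `x̄ᵢ ȳᵢ = 0` forces `μᵏ_H,ᵢ = 0` wherever `ȳᵢ ≠ 0`. All other multipliers
vanish, so approximate complementarity reduces to feasibility of `(x̄, ȳ)` and continuity. -/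

open Filter Topology
open scoped Classical

noncomputable section

theorem tendsto_min_zero_of_complementary {ι : Type*} {l : Filter ι} {c μ : ι → ℝ} {c₀ : ℝ}
    (hc : Tendsto c l (𝓝 c₀)) (hc₀ : 0 ≤ c₀) (hμ : ∀ k, 0 ≤ μ k)
    (hcompl : ∀ k, c₀ * μ k = 0) :
    Tendsto (fun k => min (c k) (μ k)) l (𝓝 0) := by
  rcases eq_or_ne c₀ 0 with rfl | hc₀_ne
  · refine squeeze_zero_norm (fun k => ?_) (tendsto_zero_iff_norm_tendsto_zero.1 hc)
    rw [Real.norm_eq_abs, Real.norm_eq_abs, abs_le]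
    exact ⟨le_min (neg_abs_le _) ((neg_nonpos.2 (abs_nonneg _)).trans (hμ k)),
      (min_le_left _ _).trans (le_abs_self _)⟩
  · have hμ0 : μ = 0 := funext fun k => (mul_eq_zero.1 (hcompl k)).resolve_left hc₀_ne
    simpa [hμ0, min_eq_right hc₀] using hc.min (tendsto_const_nhds (x := (0 : ℝ)))

theorem EuclideanSpace.sum_smul_single {ι : Type*} [Fintype ι] [DecidableEq ι]
    (v : EuclideanSpace ℝ ι) : ∑ i, v i • EuclideanSpace.single i (1 : ℝ) = v := by
  simpa using (EuclideanSpace.basisFun ι ℝ).sum_repr v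

theorem continuous_theta {n : ℕ} (α : ℕ) : Continuous (theta (n := n) α) := by
  unfold theta
  fun_prop

section

variable {n : ℕ}

def zeroCoordsDirection (G xb yb : E n) : E n :=
  WithLp.toLp 2 fun i => if yb i = 0 then (if 0 < G i * xb i then -1 else 1) else 0

variable (G xb yb : E n) {t : ℝ}

theorem add_smul_zeroCoordsDirection_apply_ne_zero (ht : 0 < t) (i : Fin n) :
    (yb + t • zeroCoordsDirection G xb yb) i ≠ 0 := by
  simp only [zeroCoordsDirection, PiLp.add_apply, PiLp.smul_apply, smul_eq_mul]
  split_ifs <;> simp_all [ht.ne']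

theorem neg_div_add_smul_zeroCoordsDirection_mul_nonneg (hxy : ∀ i, xb i * yb i = 0)
    (ht : 0 < t) (i : Fin n) :
    0 ≤ -G i / (yb + t • zeroCoordsDirection G xb yb) i * xb i := by
  simp only [zeroCoordsDirection, PiLp.add_apply, PiLp.smul_apply, smul_eq_mul]
  split_ifs with hy hpos
  · rw [hy, div_mul_eq_mul_div, neg_mul, zero_add, mul_neg_one, neg_div_neg_eq]
    positivity
  · rw [hy, div_mul_eq_mul_div, neg_mul, zero_add, mul_one]
    exact div_nonneg (by linarith) ht.le
  · rw [(mul_eq_zero.1 (hxy i)).resolve_right hy, mul_zero]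

end

theorem every_feasible_is_AKKT_general {n m p : ℕ}
    (f : E n → ℝ) (g : E n → Fin m → ℝ) (h : E n → Fin p → ℝ) (α : ℕ)
    (xb yb : E n) (hfeas : relFeas g h α xb yb) :
    ∃ (x y : ℕ → E n) (μg : ℕ → Fin m → ℝ) (μh : ℕ → Fin p → ℝ) (μθ : ℕ → ℝ)
      (μH μH' : ℕ → Fin n → ℝ) (μξ : ℕ → Fin n → ℝ),
      (∀ k i, 0 ≤ μg k i) ∧ (∀ k, 0 ≤ μθ k) ∧ (∀ k i, 0 ≤ μH k i) ∧
      (∀ k i, 0 ≤ μH' k i) ∧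
      Tendsto x atTop (𝓝 xb) ∧ Tendsto y atTop (𝓝 yb) ∧
      -- ∇ₓ Lagrangian → 0 :  ∇f + ∇g μ^g + ∇h μ^h + μ^ξ * y → 0
      Tendsto (fun k => gradLx f g h (x k) (μg k) (μh k)
          + ∑ i, (μξ k i * y k i) • EuclideanSpace.single i 1) atTop (𝓝 0) ∧
      -- ∇_y Lagrangian → 0 :  −μ^θ e − μ^H + μ^H̃ + μ^ξ * x → 0
      Tendsto (fun k i => -(μθ k) - μH k i + μH' k i + μξ k i * x k i)
        atTop (𝓝 (0 : Fin n → ℝ)) ∧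
      -- approximate complementarity
      (∀ i, Tendsto (fun k => min (-(g (x k) i)) (μg k i)) atTop (𝓝 0)) ∧
      Tendsto (fun k => min (-(theta α (y k))) (μθ k)) atTop (𝓝 0) ∧
      (∀ i, Tendsto (fun k => min (y k i) (μH k i)) atTop (𝓝 0)) ∧
      (∀ i, Tendsto (fun k => min (1 - y k i) (μH' k i)) atTop (𝓝 0)) := by
  obtain ⟨hg, -, hθ, hxy, hy01⟩ := hfeas
  set G := gradient f xb
  set t : ℕ → ℝ := fun k => 1 / ((k : ℝ) + 1)
  have ht : ∀ k, 0 < t k := fun k => by positivity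
  set y : ℕ → E n := fun k => yb + t k • zeroCoordsDirection G xb yb
  have hy : Tendsto y atTop (𝓝 yb) := by
    have ht0 : Tendsto t atTop (𝓝 0) := tendsto_one_div_add_atTop_nhds_zero_nat
    simpa using tendsto_const_nhds.add (ht0.smul_const (zeroCoordsDirection G xb yb))
  set μξ : ℕ → Fin n → ℝ := fun k i => -G i / y k i
  have hμξy : ∀ k, ∑ i, (μξ k i * y k i) • EuclideanSpace.single i (1 : ℝ) = -G := fun k => by
    rw [← EuclideanSpace.sum_smul_single (-G)]
    refine Finset.sum_congr rfl fun i _ => ?_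
    rw [div_mul_cancel₀ _ (add_smul_zeroCoordsDirection_apply_ne_zero G xb yb (ht k) i)]
    rfl
  refine ⟨fun _ => xb, y, 0, 0, 0, fun k i => μξ k i * xb i, 0, μξ, fun _ _ => le_rfl,
    fun _ => le_rfl, fun k => neg_div_add_smul_zeroCoordsDirection_mul_nonneg G xb yb hxy (ht k),
    fun _ _ => le_rfl, tendsto_const_nhds, hy, ?_, ?_, fun i => ?_, ?_, fun i => ?_, fun i => ?_⟩
  · simp [gradLx, hμξy, G]
  · simp [Pi.zero_def]
  · exact tendsto_min_zero_of_complementary tendsto_const_nhds (neg_nonneg.2 (hg i))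
      (fun _ => le_rfl) fun _ => mul_zero _
  · exact tendsto_min_zero_of_complementary ((continuous_theta α).tendsto yb |>.comp hy).neg
      (neg_nonneg.2 hθ) (fun _ => le_rfl) fun _ => mul_zero _
  · exact tendsto_min_zero_of_complementary ((PiLp.continuous_apply 2 _ i).tendsto yb |>.comp hy)
      (hy01 i).1 (fun k => neg_div_add_smul_zeroCoordsDirection_mul_nonneg G xb yb hxy (ht k) i)
      fun k => by rw [mul_left_comm, mul_comm (yb i), hxy i, mul_zero]
  · exact tendsto_min_zero_of_complementary
      (tendsto_const_nhds.sub ((PiLp.continuous_apply 2 _ i).tendsto yb |>.comp hy))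
      (sub_nonneg.2 (hy01 i).2) (fun _ => le_rfl) fun _ => mul_zero _

/-- Theorem 4.1 of the paper. Every feasible pair `(x̄,ȳ)`
of the relaxed MPCaC problem is an AKKT point of that problem viewed as a
standard NLP (with inequality constraints `g(x) ≤ 0`, `θ(y) ≤ 0`, `−y ≤ 0`,
`y − e ≤ 0` and equality constraints `h(x) = 0`, `xᵢ yᵢ = 0`). -/
theorem every_feasible_is_AKKT {n m p : ℕ}
    (f : E n → ℝ) (g : E n → Fin m → ℝ) (h : E n → Fin p → ℝ) (α : ℕ)
    (hf : ContDiff ℝ 1 f) (hg : ∀ i, ContDiff ℝ 1 (fun x => g x i))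
    (hh : ∀ j, ContDiff ℝ 1 (fun x => h x j)) (hα : 0 < α) (hαn : α < n)
    (xb yb : E n) (hfeas : relFeas g h α xb yb) :
    ∃ (x y : ℕ → E n) (μg : ℕ → Fin m → ℝ) (μh : ℕ → Fin p → ℝ) (μθ : ℕ → ℝ)
      (μH μH' : ℕ → Fin n → ℝ) (μξ : ℕ → Fin n → ℝ),
      (∀ k i, 0 ≤ μg k i) ∧ (∀ k, 0 ≤ μθ k) ∧ (∀ k i, 0 ≤ μH k i) ∧
      (∀ k i, 0 ≤ μH' k i) ∧
      Tendsto x atTop (𝓝 xb) ∧ Tendsto y atTop (𝓝 yb) ∧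
      -- ∇ₓ Lagrangian → 0 :  ∇f + ∇g μ^g + ∇h μ^h + μ^ξ * y → 0
      Tendsto (fun k => gradLx f g h (x k) (μg k) (μh k)
          + ∑ i, (μξ k i * y k i) • EuclideanSpace.single i 1) atTop (𝓝 0) ∧
      -- ∇_y Lagrangian → 0 :  −μ^θ e − μ^H + μ^H̃ + μ^ξ * x → 0
      Tendsto (fun k i => -(μθ k) - μH k i + μH' k i + μξ k i * x k i)
        atTop (𝓝 (0 : Fin n → ℝ)) ∧
      -- approximate complementarity
      (∀ i, Tendsto (fun k => min (-(g (x k) i)) (μg k i)) atTop (𝓝 0)) ∧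
      Tendsto (fun k => min (-(theta α (y k))) (μθ k)) atTop (𝓝 0) ∧
      (∀ i, Tendsto (fun k => min (y k i) (μH k i)) atTop (𝓝 0)) ∧
      (∀ i, Tendsto (fun k => min (1 - y k i) (μH' k i)) atTop (𝓝 0)) :=
  every_feasible_is_AKKT_general f g h α xb yb hfeas
end
end

section
/- If (x̄, ȳ) is a CAKKT point of the relaxed MPCaC problem viewed as a standard nonlinear program (with inequality constraints g(x) ≤ 0, θ(y) ≤ 0, −y ≤ 0, y − e ≤ 0 and equality constraints h(x) = 0, x_i y_i = 0 for all i), then (x̄, ȳ) is AW-stationary. -/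
open Filter Topology
open scoped Classical

noncomputable section

/-- `(x̄,ȳ)` is a CAKKT point of the relaxed MPCaC problem viewed as a standard
NLP (inequality constraints `g(x) ≤ 0`, `θ(y) ≤ 0`, `−y ≤ 0`, `y − e ≤ 0`;
equality constraints `h(x) = 0`, `xᵢ yᵢ = 0`). Feasibility is not included. -/
def CAKKTrelaxed {n m p : ℕ} (f : E n → ℝ) (g : E n → Fin m → ℝ)
    (h : E n → Fin p → ℝ) (α : ℕ) (xb yb : E n) : Prop :=
  ∃ (x y : ℕ → E n) (lg : ℕ → Fin m → ℝ) (lh : ℕ → Fin p → ℝ) (lθ : ℕ → ℝ)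
    (μ : ℕ → Fin n → ℝ) (lH' : ℕ → Fin n → ℝ) (lξ : ℕ → Fin n → ℝ),
    (∀ k i, 0 ≤ lg k i) ∧ (∀ k, 0 ≤ lθ k) ∧ (∀ k i, 0 ≤ μ k i) ∧
    (∀ k i, 0 ≤ lH' k i) ∧
    Tendsto x atTop (𝓝 xb) ∧ Tendsto y atTop (𝓝 yb) ∧
    Tendsto (fun k => gradLx f g h (x k) (lg k) (lh k)
        + ∑ i, (lξ k i * y k i) • EuclideanSpace.single i 1) atTop (𝓝 0) ∧
    Tendsto (fun k i => -(lθ k) - μ k i + lH' k i + lξ k i * x k i)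
      atTop (𝓝 (0 : Fin n → ℝ)) ∧
    (∀ i, Tendsto (fun k => lg k i * g (x k) i) atTop (𝓝 0)) ∧
    (∀ j, Tendsto (fun k => lh k j * h (x k) j) atTop (𝓝 0)) ∧
    Tendsto (fun k => lθ k * theta α (y k)) atTop (𝓝 0) ∧
    (∀ i, Tendsto (fun k => μ k i * y k i) atTop (𝓝 0)) ∧
    (∀ i, Tendsto (fun k => lH' k i * (y k i - 1)) atTop (𝓝 0)) ∧
    (∀ i, Tendsto (fun k => lξ k i * (x k i * y k i)) atTop (𝓝 0))

/-!
A CAKKT sequence already is an AW sequence once the multipliers of the two bilinear constraints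
are regrouped: take `λᴳ = λ^ξ * y` and `λᴴ = μ − λ^ξ * x`, so that both stationarity
conditions hold verbatim. The complementarity conditions `λ * c(x^k) → 0` of CAKKT become the
`min`-conditions of AW by a single observation about real sequences: if `u_k → u ≥ 0` and
`u_k v_k → 0`, then `min (u_k, |v_k|) → 0`. Indeed, if `u > 0` then `v_k → 0`, and if `u = 0`
then `min (u_k, |v_k|)` is squeezed between `min (u_k, 0)` and `u_k`.
-/

section MinComplementarity

variable {ι : Type*} {l : Filter ι} {u v : ι → ℝ} {u₀ : ℝ}

theorem tendsto_zero_of_tendsto_mul_of_ne_zero (hu : Tendsto u l (𝓝 u₀)) (hu₀ : u₀ ≠ 0)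
    (huv : Tendsto (fun k => u k * v k) l (𝓝 0)) : Tendsto v l (𝓝 0) := by
  have hdiv := huv.div hu hu₀
  rw [zero_div] at hdiv
  refine hdiv.congr' ?_
  filter_upwards [hu.eventually_ne hu₀] with k hk
  simp [Pi.div_apply, mul_div_cancel_left₀ _ hk]

theorem tendsto_min_abs_of_tendsto_mul (hu : Tendsto u l (𝓝 u₀)) (hu₀ : 0 ≤ u₀)
    (huv : Tendsto (fun k => u k * v k) l (𝓝 0)) :
    Tendsto (fun k => min (u k) |v k|) l (𝓝 0) := by
  rcases hu₀.eq_or_lt with rfl | hpos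
  · have hlower : Tendsto (fun k => min (u k) 0) l (𝓝 0) := by
      simpa using hu.min (tendsto_const_nhds (x := (0 : ℝ)))
    exact tendsto_of_tendsto_of_tendsto_of_le_of_le hlower hu
      (fun k => min_le_min_left _ (abs_nonneg _)) (fun k => min_le_left _ _)
  · have hv := tendsto_zero_of_tendsto_mul_of_ne_zero hu hpos.ne' huv
    simpa [min_eq_right hpos.le] using hu.min hv.abs

theorem tendsto_min_neg_of_tendsto_mul (hv : ∀ k, 0 ≤ v k) (hu : Tendsto u l (𝓝 u₀))
    (hu₀ : u₀ ≤ 0) (hvu : Tendsto (fun k => v k * u k) l (𝓝 0)) :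
    Tendsto (fun k => min (-u k) (v k)) l (𝓝 0) := by
  have hmul : Tendsto (fun k => -u k * v k) l (𝓝 0) := by
    simpa [mul_comm] using hvu.neg
  simpa [abs_of_nonneg (hv _)] using
    tendsto_min_abs_of_tendsto_mul hu.neg (neg_nonneg.mpr hu₀) hmul

theorem tendsto_min_abs_abs_of_tendsto_mul (hu : Tendsto u l (𝓝 u₀))
    (huv : Tendsto (fun k => u k * v k) l (𝓝 0)) :
    Tendsto (fun k => min |u k| |v k|) l (𝓝 0) := by
  have hmul : Tendsto (fun k => |u k| * |v k|) l (𝓝 0) := by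
    simpa [abs_mul] using huv.abs
  simpa using tendsto_min_abs_of_tendsto_mul hu.abs (abs_nonneg _) hmul

end MinComplementarity

theorem EuclideanSpace.sum_smul_single_one {ι : Type*} [Fintype ι] [DecidableEq ι]
    (c : ι → ℝ) : ∑ i, c i • EuclideanSpace.single i (1 : ℝ) = WithLp.toLp 2 c := by
  simpa [EuclideanSpace.basisFun_apply] using
    (EuclideanSpace.basisFun ι ℝ).sum_repr (WithLp.toLp 2 c)

theorem CAKKT_implies_AWStat_general {n m p : ℕ}
    (f : E n → ℝ) (g : E n → Fin m → ℝ) (h : E n → Fin p → ℝ) (α : ℕ)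
    (hg : ∀ i, ContDiff ℝ 1 (fun x => g x i))
    (xb yb : E n) (hfeas : relFeas g h α xb yb)
    (hca : CAKKTrelaxed f g h α xb yb) :
    AWStat f g h α xb yb := by
  obtain ⟨x, y, lg, lh, lθ, μ, lH', lξ, hlg, hlθ, -, hlH', hx, hy, hgrad, hstat,
    hcg, -, hcθ, hcμ, hcH', hcξ⟩ := hca
  obtain ⟨hgb, -, hθb, -, hyb⟩ := hfeas
  have hxi (i : Fin n) : Tendsto (fun k => x k i) atTop (𝓝 (xb i)) :=
    ((PiLp.continuous_apply 2 _ i).tendsto xb).comp hx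
  have hyi (i : Fin n) : Tendsto (fun k => y k i) atTop (𝓝 (yb i)) :=
    ((PiLp.continuous_apply 2 _ i).tendsto yb).comp hy
  refine ⟨x, y, lg, lh, lθ, fun k => WithLp.toLp 2 fun i => lξ k i * y k i,
    fun k i => μ k i - lξ k i * x k i, lH', hlg, hlθ, hlH', hx, hy, ?_, ?_,
    fun i => ?_, ?_, fun i => ?_, fun i => ?_, fun i => ?_⟩
  · simpa only [EuclideanSpace.sum_smul_single_one] using hgrad
  · exact hstat.congr fun k => funext fun i => by ring
  · exact tendsto_min_neg_of_tendsto_mul (hlg · i)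
      (((hg i).continuous.tendsto xb).comp hx) (hgb i) (hcg i)
  · exact tendsto_min_neg_of_tendsto_mul hlθ
      (((continuous_theta α).tendsto yb).comp hy) hθb hcθ
  · refine tendsto_min_abs_abs_of_tendsto_mul (hxi i) ((hcξ i).congr fun k => ?_)
    dsimp only
    ring
  · refine tendsto_min_abs_of_tendsto_mul (hyi i) (hyb i).1 ?_
    have hdiff := (hcμ i).sub (hcξ i)
    rw [sub_zero] at hdiff
    refine hdiff.congr fun k => ?_
    dsimp only
    ring
  · simpa using tendsto_min_neg_of_tendsto_mul (hlH' · i) ((hyi i).sub_const 1)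
      (by linarith [(hyb i).2]) (hcH' i)

/-- Theorem 4.3 of the paper. If `(x̄,ȳ)` is a CAKKT point
of the relaxed MPCaC problem viewed as a standard NLP, then `(x̄,ȳ)` is
`AW`-stationary. -/
theorem CAKKT_implies_AWStat {n m p : ℕ}
    (f : E n → ℝ) (g : E n → Fin m → ℝ) (h : E n → Fin p → ℝ) (α : ℕ)
    (hf : ContDiff ℝ 1 f) (hg : ∀ i, ContDiff ℝ 1 (fun x => g x i))
    (hh : ∀ j, ContDiff ℝ 1 (fun x => h x j)) (hα : 0 < α) (hαn : α < n)
    (xb yb : E n) (hfeas : relFeas g h α xb yb)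
    (hca : CAKKTrelaxed f g h α xb yb) :
    AWStat f g h α xb yb :=
  CAKKT_implies_AWStat_general f g h α hg xb yb hfeas hca
end
end

section
/- Let (x̄, ȳ) be a feasible pair of the relaxed MPCaC problem. Then (x̄, ȳ) is AW-stationary if and only if (x̄, ȳ) is an AKKT point of the tightened problem TNLP_{I_0}(x̄, ȳ), i.e., of the problem: minimize f(x) subject to g(x) ≤ 0, h(x) = 0, θ(y) ≤ 0, x_i = 0 for i ∈ I_0, −y_i ≤ 0 for i ∈ I_{0+} ∪ I_{01}, −y_i = 0 for i ∈ I_{00} ∪ I_{±0}, y − e ≤ 0. -/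
open Filter Topology
open scoped Classical

noncomputable section

/-- `(x̄,ȳ)` is an AKKT point of the tightened problem `TNLP_{I₀}(x̄,ȳ)`:
minimize `f(x)` s.t. `g(x) ≤ 0`, `h(x) = 0`, `θ(y) ≤ 0`, `xᵢ = 0 (i ∈ I₀)`,
`−yᵢ ≤ 0 (i ∈ I_{0+} ∪ I_{01})`, `−yᵢ = 0 (i ∈ I_{00} ∪ I_{±0})`, `y − e ≤ 0`.
Here `I₀ = {i | x̄ᵢ = 0}` and `I_{00} ∪ I_{±0} = {i | ȳᵢ = 0}`. -/
def AKKT_TNLP0 {n m p : ℕ} (f : E n → ℝ) (g : E n → Fin m → ℝ)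
    (h : E n → Fin p → ℝ) (α : ℕ) (xb yb : E n) : Prop :=
  ∃ (x y : ℕ → E n) (μg : ℕ → Fin m → ℝ) (νh : ℕ → Fin p → ℝ) (μθ : ℕ → ℝ)
    (νG : ℕ → Fin n → ℝ) (μH νH : ℕ → Fin n → ℝ) (μH' : ℕ → Fin n → ℝ),
    (∀ k i, 0 ≤ μg k i) ∧ (∀ k, 0 ≤ μθ k) ∧
    (∀ k i, inI0p01 xb yb i → 0 ≤ μH k i) ∧ (∀ k i, 0 ≤ μH' k i) ∧
    Tendsto x atTop (𝓝 xb) ∧ Tendsto y atTop (𝓝 yb) ∧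
    -- ∇ₓ Lagrangian → 0
    Tendsto (fun k => gradLx f g h (x k) (μg k) (νh k)
        + ∑ i ∈ Finset.univ.filter (fun i => xb i = 0),
            νG k i • EuclideanSpace.single i 1) atTop (𝓝 0) ∧
    -- ∇_y Lagrangian → 0
    Tendsto (fun k i => -(μθ k)
        - (if inI0p01 xb yb i then μH k i else 0)
        - (if yb i = 0 then νH k i else 0) + μH' k i)
      atTop (𝓝 (0 : Fin n → ℝ)) ∧
    -- approximate complementarity for the inequality constraints
    (∀ i, Tendsto (fun k => min (-(g (x k) i)) (μg k i)) atTop (𝓝 0)) ∧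
    Tendsto (fun k => min (-(theta α (y k))) (μθ k)) atTop (𝓝 0) ∧
    (∀ i, inI0p01 xb yb i →
      Tendsto (fun k => min (y k i) (μH k i)) atTop (𝓝 0)) ∧
    (∀ i, Tendsto (fun k => min (1 - y k i) (μH' k i)) atTop (𝓝 0))

/-!
Both notions use the same sequences `(xᵏ, yᵏ)` and the same multipliers for `g`, `h`, `θ` and
`y ≤ e`; only the multipliers of `xᵢ = 0` and of the bounds `yᵢ ≥ 0` have to be translated.
From AW to AKKT: approximate complementarity forces `λᴳᵢ → 0` when `x̄ᵢ ≠ 0` and `λᴴᵢ → 0`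
when `ȳᵢ > 0`, so these multipliers can be dropped from the Lagrangian, and the sign-constrained
multiplier of `−yᵢ ≤ 0` on `I_{0+} ∪ I_{01}` can be taken to be zero. From AKKT to AW: the AKKT
multipliers serve as AW multipliers, extended by zero; off `I_{0+} ∪ I_{01}` feasibility gives
`ȳᵢ = 0`, so `min{yᵢᵏ, |λᴴᵢᵏ|} → 0` holds whatever `λᴴᵢᵏ` is.
-/

open Finset

section Limits

variable {κ : Type*} {l : Filter κ} {a b : κ → ℝ}

theorem tendsto_right_of_tendsto_min_of_pos {c : ℝ} (hc : 0 < c) (ha : Tendsto a l (𝓝 c))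
    (hmin : Tendsto (fun k => min (a k) (b k)) l (𝓝 0)) : Tendsto b l (𝓝 0) := by
  refine hmin.congr' ((hmin.eventually_lt ha hc).mono fun k hk => min_eq_right ?_)
  exact ((min_lt_iff.mp hk).resolve_left (lt_irrefl _)).le

theorem tendsto_min_of_tendsto_zero_of_nonneg (ha : Tendsto a l (𝓝 0)) (hb : ∀ k, 0 ≤ b k) :
    Tendsto (fun k => min (a k) (b k)) l (𝓝 0) := by
  have hlower : Tendsto (fun k => min (a k) 0) l (𝓝 0) := by
    simpa using ha.min (tendsto_const_nhds (x := (0 : ℝ)))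
  exact tendsto_of_tendsto_of_tendsto_of_le_of_le hlower ha
    (fun k => min_le_min_left _ (hb k)) (fun k => min_le_left _ _)

end Limits

namespace EuclideanSpace

variable {ι κ : Type*} [DecidableEq ι] {l : Filter κ}

theorem sum_smul_single_apply (s : Finset ι) (c : ι → ℝ) (j : ι) :
    (∑ i ∈ s, c i • single i (1 : ℝ)) j = if j ∈ s then c j else 0 := by
  rw [WithLp.ofLp_sum, Finset.sum_apply]
  simp

variable [Fintype ι]

theorem tendsto_sum_smul_single {c : κ → ι → ℝ} (s : Finset ι)
    (hc : ∀ i ∈ s, Tendsto (fun k => c k i) l (𝓝 0)) :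
    Tendsto (fun k => ∑ i ∈ s, c k i • single i (1 : ℝ)) l (𝓝 0) := by
  simpa using tendsto_finsetSum s fun i hi => (hc i hi).smul_const (single i (1 : ℝ))

theorem sum_filter_smul_single (v : EuclideanSpace ℝ ι) (P : ι → Prop) [DecidablePred P] :
    ∑ i ∈ univ.filter P, v i • single i (1 : ℝ)
      = v - ∑ i ∈ univ.filter (fun i => ¬ P i), v i • single i (1 : ℝ) := by
  rw [eq_sub_iff_add_eq, sum_filter_add_sum_filter_not]
  simpa using (basisFun ι ℝ).sum_repr v

theorem tendsto_add_sum_filter_smul_single {A v : κ → EuclideanSpace ℝ ι} (P : ι → Prop)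
    [DecidablePred P] (hAv : Tendsto (fun k => A k + v k) l (𝓝 0))
    (hv : ∀ i, ¬ P i → Tendsto (fun k => v k i) l (𝓝 0)) :
    Tendsto (fun k => A k + ∑ i ∈ univ.filter P, v k i • single i (1 : ℝ)) l (𝓝 0) := by
  have hrest := tendsto_sum_smul_single (univ.filter fun i => ¬ P i)
    fun i hi => hv i (mem_filter.mp hi).2
  have hsplit : ∀ k, A k + ∑ i ∈ univ.filter P, v k i • single i (1 : ℝ)
      = (A k + v k) - ∑ i ∈ univ.filter (fun i => ¬ P i), v k i • single i (1 : ℝ) := fun k => by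
    rw [sum_filter_smul_single, add_sub_assoc]
  simpa only [hsplit, sub_zero] using hAv.sub hrest

end EuclideanSpace

section Stationarity

variable {n m p : ℕ} {f : E n → ℝ} {g : E n → Fin m → ℝ} {h : E n → Fin p → ℝ} {α : ℕ}
  {xb yb : E n}

theorem pos_of_inI0p01 {i : Fin n} (hi : inI0p01 xb yb i) : 0 < yb i := by
  rcases hi.2 with ⟨hpos, -⟩ | hone
  · exact hpos
  · exact hone ▸ one_pos

theorem relFeas.eq_zero_of_not_inI0p01 (hfeas : relFeas g h α xb yb) {i : Fin n}
    (hi : ¬ inI0p01 xb yb i) : yb i = 0 := by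
  obtain ⟨-, -, -, hcompl, hbox⟩ := hfeas
  by_contra hne
  have hx : xb i = 0 := (mul_eq_zero.mp (hcompl i)).resolve_right hne
  exact hi ⟨hx, (hbox i).2.lt_or_eq.imp (fun hlt => ⟨(hbox i).1.lt_of_ne' hne, hlt⟩) id⟩

theorem AKKT_TNLP0_of_AWStat (hyb : ∀ i, 0 ≤ yb i) (hAW : AWStat f g h α xb yb) :
    AKKT_TNLP0 f g h α xb yb := by
  obtain ⟨x, y, lg, lh, lθ, lG, lH, lH', hlg, hlθ, hlH', hx, hy, hgradx, hgrady,
    hming, hminθ, hminG, hminH, hminH'⟩ := hAW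
  have hxi : ∀ i, Tendsto (fun k => x k i) atTop (𝓝 (xb i)) :=
    fun i => ((PiLp.continuous_apply 2 _ i).tendsto xb).comp hx
  have hyi : ∀ i, Tendsto (fun k => y k i) atTop (𝓝 (yb i)) :=
    fun i => ((PiLp.continuous_apply 2 _ i).tendsto yb).comp hy
  have hlG : ∀ i, xb i ≠ 0 → Tendsto (fun k => lG k i) atTop (𝓝 0) := fun i hi =>
    (tendsto_zero_iff_abs_tendsto_zero _).2 <|
      tendsto_right_of_tendsto_min_of_pos (abs_pos.2 hi) (hxi i).abs (hminG i)
  have hlH : ∀ i, yb i ≠ 0 → Tendsto (fun k => lH k i) atTop (𝓝 0) := fun i hi =>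
    (tendsto_zero_iff_abs_tendsto_zero _).2 <|
      tendsto_right_of_tendsto_min_of_pos ((hyb i).lt_of_ne' hi) (hyi i) (hminH i)
  refine ⟨x, y, lg, lh, lθ, fun k i => lG k i, 0, lH, lH', hlg, hlθ, fun _ _ _ => le_rfl,
    hlH', hx, hy, EuclideanSpace.tendsto_add_sum_filter_smul_single _ hgradx hlG, ?_, hming,
    hminθ, fun i _ => ?_, hminH'⟩
  · rw [tendsto_pi_nhds] at hgrady ⊢
    intro i
    by_cases hi : yb i = 0
    · simpa [hi] using hgrady i
    · simpa [hi] using ((hgrady i).add (hlH i hi)).congr fun k => by ring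
  · simpa [min_eq_right (hyb i)] using (hyi i).min (tendsto_const_nhds (x := (0 : ℝ)))

theorem AWStat_of_AKKT_TNLP0 (hyb : ∀ i, ¬ inI0p01 xb yb i → yb i = 0)
    (hAKKT : AKKT_TNLP0 f g h α xb yb) : AWStat f g h α xb yb := by
  obtain ⟨x, y, μg, νh, μθ, νG, μH, νH, μH', hμg, hμθ, hμH, hμH', hx, hy, hgradx, hgrady,
    hming, hminθ, hminH, hminH'⟩ := hAKKT
  have hxi : ∀ i, Tendsto (fun k => x k i) atTop (𝓝 (xb i)) :=
    fun i => ((PiLp.continuous_apply 2 _ i).tendsto xb).comp hx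
  have hyi : ∀ i, Tendsto (fun k => y k i) atTop (𝓝 (yb i)) :=
    fun i => ((PiLp.continuous_apply 2 _ i).tendsto yb).comp hy
  refine ⟨x, y, μg, νh, μθ,
    fun k => ∑ i ∈ univ.filter (fun i => xb i = 0), νG k i • EuclideanSpace.single i 1,
    fun k i => (if inI0p01 xb yb i then μH k i else 0) + (if yb i = 0 then νH k i else 0),
    μH', hμg, hμθ, hμH', hx, hy, hgradx, by simpa only [sub_sub] using hgrady, hming, hminθ,
    fun i => ?_, fun i => ?_, hminH'⟩
  · simp only [EuclideanSpace.sum_smul_single_apply, mem_filter, mem_univ, true_and]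
    by_cases hi : xb i = 0
    · exact tendsto_min_of_tendsto_zero_of_nonneg (by simpa [hi] using (hxi i).abs)
        fun _ => abs_nonneg _
    · simp [hi]
  · by_cases hi : inI0p01 xb yb i
    · simpa [hi, (pos_of_inI0p01 hi).ne', abs_of_nonneg (hμH _ i hi)] using hminH i hi
    · exact tendsto_min_of_tendsto_zero_of_nonneg (by simpa [hyb i hi] using hyi i)
        fun _ => abs_nonneg _

end Stationarity

theorem AWStat_iff_AKKT_TNLP0_general {n m p : ℕ}
    (f : E n → ℝ) (g : E n → Fin m → ℝ) (h : E n → Fin p → ℝ) (α : ℕ)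
    (xb yb : E n) (hfeas : relFeas g h α xb yb) :
    AWStat f g h α xb yb ↔ AKKT_TNLP0 f g h α xb yb :=
  ⟨AKKT_TNLP0_of_AWStat fun i => (hfeas.2.2.2.2 i).1,
    AWStat_of_AKKT_TNLP0 fun _ => hfeas.eq_zero_of_not_inI0p01⟩

/-- Theorem 4.5 of the paper. A feasible pair `(x̄,ȳ)` of
the relaxed MPCaC problem is `AW`-stationary iff it is an AKKT point of the
tightened problem `TNLP_{I₀}(x̄,ȳ)`. -/
theorem AWStat_iff_AKKT_TNLP0 {n m p : ℕ}
    (f : E n → ℝ) (g : E n → Fin m → ℝ) (h : E n → Fin p → ℝ) (α : ℕ)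
    (hf : ContDiff ℝ 1 f) (hg : ∀ i, ContDiff ℝ 1 (fun x => g x i))
    (hh : ∀ j, ContDiff ℝ 1 (fun x => h x j)) (hα : 0 < α) (hαn : α < n)
    (xb yb : E n) (hfeas : relFeas g h α xb yb) :
    AWStat f g h α xb yb ↔ AKKT_TNLP0 f g h α xb yb :=
  AWStat_iff_AKKT_TNLP0_general f g h α xb yb hfeas
end
end
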